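/- arXiv:2403.12108 — 11 statements merged into one kernel-verified Lean document; each statement's English description precedes it below -/
import Mathlib

section
/- Let (Y0, D, A, Z) be random variables on a probability space with Y0, D, A ∈ {0,1}, Z ∈ {0,1}, and suppose Z is independent of (Y0, A, D(0), D(1)) where D = D(Z), and Y (the observed outcome) satisfies Y = Y0 on the event D = 0. Fix a ∈ {0,1} and define θ_a = P(Y0 = 1, D = 1, A = a). Then θ_a ≥ max_{z∈{0,1}} P(Y = 1, D = 0, A = a | Z = z) − P(Y = 1, D = 0, A = a). -/
open MeasureTheory ProbabilityTheory

noncomputable def Pr {Ω : Type*} [MeasurableSpace Ω] (μ : Measure Ω) (s : Set Ω) : ℝ :=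
  (μ s).toReal

noncomputable def cPr {Ω : Type*} [MeasurableSpace Ω] (μ : Measure Ω) (s t : Set Ω) : ℝ :=
  Pr μ (s ∩ t) / Pr μ t

/-- Lower bound on θ_a = P(Y0 = 1, D = 1, A = a). -/
theorem stmt2 {Ω : Type*} [MeasurableSpace Ω] (μ : Measure Ω) [IsProbabilityMeasure μ]
    (Y0 Y A Z : Ω → Bool) (Dp : Bool → Ω → Bool) (D : Ω → Bool)
    (hY0 : Measurable Y0) (hY : Measurable Y) (hA : Measurable A) (hZ : Measurable Z)
    (hDp : ∀ z, Measurable (Dp z))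
    (hDdef : ∀ ω, D ω = Dp (Z ω) ω)
    (hblind : ∀ ω, D ω = false → Y ω = Y0 ω)
    (hind : IndepFun Z (fun ω => (Y0 ω, A ω, Dp false ω, Dp true ω)) μ)
    (hZ0 : 0 < Pr μ {ω | Z ω = false}) (hZ1 : 0 < Pr μ {ω | Z ω = true})
    (a : Bool) (θ : ℝ)
    (hθ : θ = Pr μ {ω | Y0 ω = true ∧ D ω = true ∧ A ω = a}) :
    θ ≥ max (cPr μ {ω | Y ω = true ∧ D ω = false ∧ A ω = a} {ω | Z ω = true})
            (cPr μ {ω | Y ω = true ∧ D ω = false ∧ A ω = a} {ω | Z ω = false})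
        - Pr μ {ω | Y ω = true ∧ D ω = false ∧ A ω = a} := by
  set S : Set Ω := {ω | Y ω = true ∧ D ω = false ∧ A ω = a} with hSdef
  set Tset : Set Ω := {ω | Y0 ω = true ∧ D ω = true ∧ A ω = a} with hTdef
  have key : ∀ z : Bool, cPr μ S {ω | Z ω = z} ≤ θ + Pr μ S := by
    intro z
    set W : Ω → Bool × Bool × Bool × Bool := fun ω => (Y0 ω, A ω, Dp false ω, Dp true ω)
      with hWdef
    set T : Set (Bool × Bool × Bool × Bool) :=
      {p | p.1 = true ∧ p.2.1 = a ∧ (if z then p.2.2.2 else p.2.2.1) = false} with hTset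
    have hTmeas : MeasurableSet T := (Set.to_countable T).measurableSet
    have hDpz : ∀ ω, (if z then Dp true ω else Dp false ω) = Dp z ω := by
      intro ω; cases z <;> rfl
    have hseteq : S ∩ {ω | Z ω = z} = Z ⁻¹' {z} ∩ W ⁻¹' T := by
      ext ω
      simp only [hSdef, hTset, hWdef, Set.mem_inter_iff, Set.mem_setOf_eq, Set.mem_preimage,
        Set.mem_singleton_iff]
      constructor
      · rintro ⟨⟨hy, hd, ha⟩, hz⟩
        refine ⟨hz, ?_, ha, ?_⟩
        · rw [← hblind ω hd, hy]
        · rw [hDpz ω, ← hz, ← hDdef ω]; exact hd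
      · rintro ⟨hz, hy0, ha, hdp⟩
        have hd : D ω = false := by
          rw [hDdef ω, hz, ← hDpz ω]; exact hdp
        exact ⟨⟨by rw [hblind ω hd, hy0], hd, ha⟩, hz⟩
    have hindep := hind.measure_inter_preimage_eq_mul {z} T (measurableSet_singleton z) hTmeas
    have hZzpos : 0 < Pr μ {ω | Z ω = z} := by
      cases z
      · exact hZ0
      · exact hZ1
    have hZpre : Z ⁻¹' ({z} : Set Bool) = {ω | Z ω = z} := rfl
    have hc : cPr μ S {ω | Z ω = z} = (μ (W ⁻¹' T)).toReal := by
      unfold cPr Pr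
      have h0 : (μ {ω | Z ω = z}).toReal ≠ 0 := ne_of_gt hZzpos
      rw [hseteq, hindep, ENNReal.toReal_mul, hZpre, mul_comm, mul_div_assoc,
        div_self h0, mul_one]
    rw [hc]
    have hsub : W ⁻¹' T ⊆ S ∪ Tset := by
      intro ω hω
      simp only [hWdef, hTset, Set.mem_preimage, Set.mem_setOf_eq] at hω
      obtain ⟨hy0, ha, hdp⟩ := hω
      cases hD : D ω
      · exact Or.inl ⟨by rw [hblind ω hD, hy0], hD, ha⟩
      · exact Or.inr ⟨hy0, hD, ha⟩
    have hle : μ (W ⁻¹' T) ≤ μ S + μ Tset :=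
      (measure_mono hsub).trans (measure_union_le _ _)
    have : (μ (W ⁻¹' T)).toReal ≤ (μ S + μ Tset).toReal :=
      ENNReal.toReal_le_toReal (measure_ne_top _ _)
        (by simp [ENNReal.add_ne_top, measure_ne_top]) |>.mpr hle
    rw [ENNReal.toReal_add (measure_ne_top _ _) (measure_ne_top _ _)] at this
    calc (μ (W ⁻¹' T)).toReal ≤ (μ S).toReal + (μ Tset).toReal := this
      _ = θ + Pr μ S := by rw [hθ]; unfold Pr; ring
  rw [ge_iff_le, sub_le_iff_le_add]
  exact max_le (key true) (key false)
end

section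
/- Under the same setup as the lower-bound lemma: with θ_a = P(Y0 = 1, D = 1, A = a), Z independent of (Y0, A, D(0), D(1)), D = D(Z), and Y = Y0 on {D = 0}, it holds that θ_a ≤ P(A = a) − P(Y = 1, D = 0, A = a) − max_{z∈{0,1}} P(Y = 0, D = 0, A = a | Z = z). -/
open MeasureTheory ProbabilityTheory

/-- Upper bound on θ_a = P(Y0 = 1, D = 1, A = a). -/
theorem stmt3 {Ω : Type*} [MeasurableSpace Ω] (μ : Measure Ω) [IsProbabilityMeasure μ]
    (Y0 Y A Z : Ω → Bool) (Dp : Bool → Ω → Bool) (D : Ω → Bool)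
    (hY0 : Measurable Y0) (hY : Measurable Y) (hA : Measurable A) (hZ : Measurable Z)
    (hDp : ∀ z, Measurable (Dp z))
    (hDdef : ∀ ω, D ω = Dp (Z ω) ω)
    (hblind : ∀ ω, D ω = false → Y ω = Y0 ω)
    (hind : IndepFun Z (fun ω => (Y0 ω, A ω, Dp false ω, Dp true ω)) μ)
    (hZ0 : 0 < Pr μ {ω | Z ω = false}) (hZ1 : 0 < Pr μ {ω | Z ω = true})
    (a : Bool) (θ : ℝ)
    (hθ : θ = Pr μ {ω | Y0 ω = true ∧ D ω = true ∧ A ω = a}) :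
    θ ≤ Pr μ {ω | A ω = a}
        - Pr μ {ω | Y ω = true ∧ D ω = false ∧ A ω = a}
        - max (cPr μ {ω | Y ω = false ∧ D ω = false ∧ A ω = a} {ω | Z ω = true})
              (cPr μ {ω | Y ω = false ∧ D ω = false ∧ A ω = a} {ω | Z ω = false}) := by
  classical
  have hDm : Measurable D := by
    have : D = fun ω => if Z ω = true then Dp true ω else Dp false ω := by
      funext ω; rw [hDdef]; cases hz : Z ω <;> simp
    rw [this]
    exact Measurable.ite (hZ (measurableSet_singleton true)) (hDp true) (hDp false)
  have padd : ∀ s t : Set Ω, MeasurableSet t → Disjoint s t →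
      Pr μ (s ∪ t) = Pr μ s + Pr μ t := by
    intro s t ht hd
    unfold Pr
    rw [measure_union hd ht, ENNReal.toReal_add (measure_ne_top μ s) (measure_ne_top μ t)]
  set S1 := {ω | Y0 ω = true ∧ D ω = true ∧ A ω = a} with hS1
  set S0 := {ω | Y0 ω = true ∧ D ω = false ∧ A ω = a} with hS0
  set T1 := {ω | Y0 ω = true ∧ A ω = a} with hT1
  set T0 := {ω | Y0 ω = false ∧ A ω = a} with hT0
  have hmA : MeasurableSet {ω | A ω = a} := hA (measurableSet_singleton a)
  have hmT0 : MeasurableSet T0 := (hY0 (measurableSet_singleton false)).inter hmA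
  have hmS0 : MeasurableSet S0 :=
    (hY0 (measurableSet_singleton true)).inter ((hDm (measurableSet_singleton false)).inter hmA)
  have hsplitA : Pr μ {ω | A ω = a} = Pr μ T1 + Pr μ T0 := by
    have he : {ω | A ω = a} = T1 ∪ T0 := by
      ext ω; simp only [hT1, hT0, Set.mem_union, Set.mem_setOf_eq]
      cases hy : Y0 ω <;> tauto
    rw [he, padd _ _ hmT0]
    rw [Set.disjoint_left]
    rintro u ⟨h1, -⟩ ⟨h2, -⟩
    simp_all
  have hsplitT1 : Pr μ T1 = Pr μ S1 + Pr μ S0 := by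
    have he : T1 = S1 ∪ S0 := by
      ext ω; simp only [hS1, hS0, hT1, Set.mem_union, Set.mem_setOf_eq]
      cases hd : D ω <;> tauto
    rw [he, padd _ _ hmS0]
    rw [Set.disjoint_left]
    rintro u ⟨-, h1, -⟩ ⟨-, h2, -⟩
    simp_all
  have hS0eq : S0 = {ω | Y ω = true ∧ D ω = false ∧ A ω = a} := by
    ext ω
    simp only [hS0, Set.mem_setOf_eq]
    constructor
    · rintro ⟨h1, h2, h3⟩; exact ⟨by rw [hblind ω h2]; exact h1, h2, h3⟩
    · rintro ⟨h1, h2, h3⟩; exact ⟨by rw [← hblind ω h2]; exact h1, h2, h3⟩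
  -- conditional probabilities
  set W : Ω → Bool × Bool × Bool × Bool := fun ω => (Y0 ω, A ω, Dp false ω, Dp true ω) with hWdef
  have hcond : ∀ z : Bool,
      cPr μ {ω | Y ω = false ∧ D ω = false ∧ A ω = a} {ω | Z ω = z}
        = Pr μ {ω | Y0 ω = false ∧ Dp z ω = false ∧ A ω = a} := by
    intro z
    have hz : (0:ℝ) < Pr μ {ω | Z ω = z} := by cases z; exact hZ0; exact hZ1
    set t : Set (Bool × Bool × Bool × Bool) :=
      {p | p.1 = false ∧ p.2.1 = a ∧ (cond z p.2.2.2 p.2.2.1) = false} with ht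
    have hWt : W ⁻¹' t = {ω | Y0 ω = false ∧ Dp z ω = false ∧ A ω = a} := by
      ext ω
      cases z <;> simp [ht, hWdef, Set.mem_preimage] <;> tauto
    have he : {ω | Y ω = false ∧ D ω = false ∧ A ω = a} ∩ {ω | Z ω = z}
        = (Z ⁻¹' {z}) ∩ (W ⁻¹' t) := by
      ext ω
      simp only [hWt, Set.mem_inter_iff, Set.mem_setOf_eq, Set.mem_preimage,
        Set.mem_singleton_iff]
      constructor
      · rintro ⟨⟨h1, h2, h3⟩, h4⟩
        refine ⟨h4, ?_, ?_, h3⟩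
        · rw [← hblind ω h2]; exact h1
        · rw [← h4, ← hDdef]; exact h2
      · rintro ⟨h4, h1, h2, h3⟩
        have hd : D ω = false := by rw [hDdef, h4]; exact h2
        exact ⟨⟨by rw [hblind ω hd]; exact h1, hd, h3⟩, h4⟩
    have hindm := hind.measure_inter_preimage_eq_mul {z} t
      (measurableSet_singleton z) ((Set.toFinite t).measurableSet)
    unfold cPr Pr
    rw [he]
    have hZpre : Z ⁻¹' {z} = {ω | Z ω = z} := rfl
    rw [hindm, hZpre, hWt, ENNReal.toReal_mul]
    have hz' : (μ {ω | Z ω = z}).toReal ≠ 0 := ne_of_gt hz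
    rw [mul_comm, mul_div_assoc, div_self hz', mul_one]
  have hsub : ∀ z : Bool, Pr μ {ω | Y0 ω = false ∧ Dp z ω = false ∧ A ω = a} ≤ Pr μ T0 := by
    intro z
    apply ENNReal.toReal_mono (measure_ne_top μ _)
    apply measure_mono
    rintro ω ⟨h1, -, h3⟩
    exact ⟨h1, h3⟩
  have hmax : max (cPr μ {ω | Y ω = false ∧ D ω = false ∧ A ω = a} {ω | Z ω = true})
      (cPr μ {ω | Y ω = false ∧ D ω = false ∧ A ω = a} {ω | Z ω = false}) ≤ Pr μ T0 := by
    rw [hcond true, hcond false]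
    exact max_le (hsub true) (hsub false)
  rw [hθ, ← hS0eq, hsplitA, hsplitT1]
  linarith
end

section
/- Let Y0, A, Z ∈ {0,1} and potential decisions D(0), D(1) ∈ {0,1} be random variables with Z independent of (Y0, A, D(0), D(1)), and let Y agree with Y0 on the event D(Z) = 0, where D = D(Z). For a, z ∈ {0,1} define ξ_{az} = P(Y0 = 1, D(z) = 1, A = a). Then max_{z'} P(Y = 1, D = 0, A = a | Z = z') − P(Y = 1, D = 0, A = a | Z = z) ≤ ξ_{az} ≤ P(A = a) − P(Y = 1, D = 0, A = a | Z = z) − max_{z'} P(Y = 0, D = 0, A = a | Z = z'). -/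
open MeasureTheory ProbabilityTheory

/-- Sharp bounds on ξ_{az} = P(Y0 = 1, D(z) = 1, A = a). -/
theorem stmt4 {Ω : Type*} [MeasurableSpace Ω] (μ : Measure Ω) [IsProbabilityMeasure μ]
    (Y0 Y A Z : Ω → Bool) (Dp : Bool → Ω → Bool) (D : Ω → Bool)
    (hY0 : Measurable Y0) (hY : Measurable Y) (hA : Measurable A) (hZ : Measurable Z)
    (hDp : ∀ z, Measurable (Dp z))
    (hDdef : ∀ ω, D ω = Dp (Z ω) ω)
    (hblind : ∀ ω, D ω = false → Y ω = Y0 ω)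
    (hind : IndepFun Z (fun ω => (Y0 ω, A ω, Dp false ω, Dp true ω)) μ)
    (hZ0 : 0 < Pr μ {ω | Z ω = false}) (hZ1 : 0 < Pr μ {ω | Z ω = true})
    (a z : Bool) (ξ : ℝ)
    (hξ : ξ = Pr μ {ω | Y0 ω = true ∧ Dp z ω = true ∧ A ω = a}) :
    (max (cPr μ {ω | Y ω = true ∧ D ω = false ∧ A ω = a} {ω | Z ω = true})
         (cPr μ {ω | Y ω = true ∧ D ω = false ∧ A ω = a} {ω | Z ω = false})
      - cPr μ {ω | Y ω = true ∧ D ω = false ∧ A ω = a} {ω | Z ω = z} ≤ ξ)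
    ∧ ξ ≤ Pr μ {ω | A ω = a}
          - cPr μ {ω | Y ω = true ∧ D ω = false ∧ A ω = a} {ω | Z ω = z}
          - max (cPr μ {ω | Y ω = false ∧ D ω = false ∧ A ω = a} {ω | Z ω = true})
                (cPr μ {ω | Y ω = false ∧ D ω = false ∧ A ω = a} {ω | Z ω = false}) := by
  classical
  -- abbreviation
  set f : Ω → Bool × Bool × Bool × Bool := fun ω => (Y0 ω, A ω, Dp false ω, Dp true ω) with hf
  have prmono : ∀ s t : Set Ω, s ⊆ t → Pr μ s ≤ Pr μ t := fun s t h =>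
    ENNReal.toReal_mono (measure_ne_top μ t) (measure_mono h)
  have hZpos : ∀ z' : Bool, 0 < Pr μ {ω | Z ω = z'} := by
    intro z'; cases z' <;> assumption
  -- key identity: conditional prob equals joint potential prob
  have key : ∀ (b z' : Bool),
      cPr μ {ω | Y ω = b ∧ D ω = false ∧ A ω = a} {ω | Z ω = z'}
        = Pr μ {ω | Y0 ω = b ∧ Dp z' ω = false ∧ A ω = a} := by
    intro b z'
    have hT : MeasurableSet {p : Bool × Bool × Bool × Bool |
        p.1 = b ∧ (if z' then p.2.2.2 else p.2.2.1) = false ∧ p.2.1 = a} :=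
      (Set.toFinite _).measurableSet
    have hset : {ω | Y ω = b ∧ D ω = false ∧ A ω = a} ∩ {ω | Z ω = z'}
        = Z ⁻¹' {z'} ∩ f ⁻¹' {p : Bool × Bool × Bool × Bool |
            p.1 = b ∧ (if z' then p.2.2.2 else p.2.2.1) = false ∧ p.2.1 = a} := by
      ext ω
      simp only [Set.mem_inter_iff, Set.mem_setOf_eq, Set.mem_preimage,
        Set.mem_singleton_iff, hf]
      constructor
      · rintro ⟨⟨hy, hd, ha⟩, hz⟩
        have hdz : Dp z' ω = false := by rw [← hz, ← hDdef ω]; exact hd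
        have hy0 : Y0 ω = b := by rw [← hblind ω hd]; exact hy
        refine ⟨hz, hy0, ?_, ha⟩
        cases z' <;> simpa using hdz
      · rintro ⟨hz, hy0, hdz, ha⟩
        have hdz' : Dp z' ω = false := by cases z' <;> simpa using hdz
        have hd : D ω = false := by rw [hDdef ω, hz]; exact hdz'
        exact ⟨⟨by rw [hblind ω hd]; exact hy0, hd, ha⟩, hz⟩
    have hfT : f ⁻¹' {p : Bool × Bool × Bool × Bool |
        p.1 = b ∧ (if z' then p.2.2.2 else p.2.2.1) = false ∧ p.2.1 = a}
        = {ω | Y0 ω = b ∧ Dp z' ω = false ∧ A ω = a} := by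
      ext ω
      cases z' <;> simp [hf, Set.mem_preimage, and_comm] <;> tauto
    have hmul := hind.measure_inter_preimage_eq_mul {z'} _
      (measurableSet_singleton z') hT
    have hprod : Pr μ ({ω | Y ω = b ∧ D ω = false ∧ A ω = a} ∩ {ω | Z ω = z'})
        = Pr μ {ω | Z ω = z'} * Pr μ {ω | Y0 ω = b ∧ Dp z' ω = false ∧ A ω = a} := by
      rw [hset]
      unfold Pr
      rw [← hfT]
      rw [hmul, ENNReal.toReal_mul]
      rfl
    unfold cPr
    rw [hprod, mul_comm, mul_div_assoc, div_self (ne_of_gt (hZpos z')), mul_one]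
  -- decompositions
  have meas3 : ∀ (b c : Bool) (z' : Bool),
      MeasurableSet {ω | Y0 ω = b ∧ Dp z' ω = c ∧ A ω = a} := fun b c z' =>
    (hY0 (measurableSet_singleton b)).inter
      ((hDp z' (measurableSet_singleton c)).inter (hA (measurableSet_singleton a)))
  have split : ∀ (b : Bool) (z' : Bool),
      Pr μ {ω | Y0 ω = b ∧ A ω = a}
        = Pr μ {ω | Y0 ω = b ∧ Dp z' ω = true ∧ A ω = a}
          + Pr μ {ω | Y0 ω = b ∧ Dp z' ω = false ∧ A ω = a} := by
    intro b z'
    have hu : {ω | Y0 ω = b ∧ A ω = a}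
        = {ω | Y0 ω = b ∧ Dp z' ω = true ∧ A ω = a}
          ∪ {ω | Y0 ω = b ∧ Dp z' ω = false ∧ A ω = a} := by
      ext ω
      by_cases h : Dp z' ω = true
      · simp [h]
      · simp only [Bool.not_eq_true] at h; simp [h]
    have hdisj : Disjoint {ω | Y0 ω = b ∧ Dp z' ω = true ∧ A ω = a}
        {ω | Y0 ω = b ∧ Dp z' ω = false ∧ A ω = a} := by
      rw [Set.disjoint_left]
      rintro ω ⟨_, h1, _⟩ ⟨_, h2, _⟩
      rw [h1] at h2; exact Bool.noConfusion h2
    unfold Pr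
    rw [hu, measure_union hdisj (meas3 b false z'),
      ENNReal.toReal_add (measure_ne_top μ _) (measure_ne_top μ _)]
  have splitA : Pr μ {ω | A ω = a}
      = Pr μ {ω | Y0 ω = true ∧ A ω = a} + Pr μ {ω | Y0 ω = false ∧ A ω = a} := by
    have hu : {ω | A ω = a}
        = {ω | Y0 ω = true ∧ A ω = a} ∪ {ω | Y0 ω = false ∧ A ω = a} := by
      ext ω
      by_cases h : Y0 ω = true
      · simp [h]
      · simp only [Bool.not_eq_true] at h; simp [h]
    have hdisj : Disjoint {ω | Y0 ω = true ∧ A ω = a} {ω | Y0 ω = false ∧ A ω = a} := by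
      rw [Set.disjoint_left]
      rintro ω ⟨h1, _⟩ ⟨h2, _⟩
      rw [h1] at h2; exact Bool.noConfusion h2
    have hm : MeasurableSet {ω | Y0 ω = false ∧ A ω = a} :=
      (hY0 (measurableSet_singleton false)).inter (hA (measurableSet_singleton a))
    unfold Pr
    rw [hu, measure_union hdisj hm,
      ENNReal.toReal_add (measure_ne_top μ _) (measure_ne_top μ _)]
  rw [key true true, key true false, key false true, key false false, key true z, hξ]
  have hQ1 := split true z
  have hsubT : ∀ z' : Bool, Pr μ {ω | Y0 ω = true ∧ Dp z' ω = false ∧ A ω = a}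
      ≤ Pr μ {ω | Y0 ω = true ∧ A ω = a} := fun z' =>
    prmono _ _ (fun ω h => ⟨h.1, h.2.2⟩)
  have hsubF : ∀ z' : Bool, Pr μ {ω | Y0 ω = false ∧ Dp z' ω = false ∧ A ω = a}
      ≤ Pr μ {ω | Y0 ω = false ∧ A ω = a} := fun z' =>
    prmono _ _ (fun ω h => ⟨h.1, h.2.2⟩)
  constructor
  · have h1 : Pr μ {ω | Y0 ω = true ∧ Dp true ω = false ∧ A ω = a}
        ≤ Pr μ {ω | Y0 ω = true ∧ Dp z ω = true ∧ A ω = a}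
          + Pr μ {ω | Y0 ω = true ∧ Dp z ω = false ∧ A ω = a} := by
      linarith [hsubT true]
    have h2 : Pr μ {ω | Y0 ω = true ∧ Dp false ω = false ∧ A ω = a}
        ≤ Pr μ {ω | Y0 ω = true ∧ Dp z ω = true ∧ A ω = a}
          + Pr μ {ω | Y0 ω = true ∧ Dp z ω = false ∧ A ω = a} := by
      linarith [hsubT false]
    have := max_le h1 h2
    linarith
  · have := max_le (hsubF true) (hsubF false)
    linarith
end

section
/- Let Y0, A, Z ∈ {0,1}, potential decisions D(0), D(1) ∈ {0,1}, with Z independent of (Y0, A, D(0), D(1)), D = D(Z), and Y = Y0 on {D = 0}. Define R_AI(ℓ) = P(Y0 = 1, A = 0) + ℓ·P(Y0 = 0, A = 1) and R_Human(ℓ) = P(Y0 = 1, D(0) = 0) + ℓ·P(Y0 = 0, D(0) = 1). Then R_AI(ℓ) − R_Human(ℓ) = (1 + ℓ)·[P(Y0 = 1, D(0) = 1, A = 0) − P(Y = 1, D = 0, A = 1 | Z = 0)] + ℓ·[P(D = 0, A = 1 | Z = 0) − P(D = 1, A = 0 | Z = 0)]. -/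
open MeasureTheory ProbabilityTheory

lemma Pr_split {Ω : Type*} [MeasurableSpace Ω] (μ : Measure Ω) [IsProbabilityMeasure μ]
    {s : Set Ω} (hs : MeasurableSet s) {b : Ω → Bool} (hb : Measurable b) :
    Pr μ s = Pr μ (s ∩ {ω | b ω = true}) + Pr μ (s ∩ {ω | b ω = false}) := by
  have hbt : MeasurableSet {ω | b ω = true} := hb (MeasurableSet.singleton true)
  have hbf : MeasurableSet {ω | b ω = false} := hb (MeasurableSet.singleton false)
  have hdisj : Disjoint (s ∩ {ω | b ω = true}) (s ∩ {ω | b ω = false}) := by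
    apply Set.disjoint_left.mpr
    rintro ω ⟨_, h1⟩ ⟨_, h2⟩
    simp_all
  have hunion : (s ∩ {ω | b ω = true}) ∪ (s ∩ {ω | b ω = false}) = s := by
    ext ω; cases h : b ω <;> simp [h]
  rw [Pr, Pr, Pr, ← ENNReal.toReal_add (measure_ne_top _ _) (measure_ne_top _ _),
    ← measure_union hdisj (hs.inter hbf), hunion]

lemma cPr_indep {Ω : Type*} [MeasurableSpace Ω] (μ : Measure Ω) [IsProbabilityMeasure μ]
    (Z : Ω → Bool) (W : Ω → Bool × Bool × Bool × Bool)
    (hind : IndepFun Z W μ) (hZ0 : 0 < Pr μ {ω | Z ω = false})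
    (s : Set Ω) (S : Set (Bool × Bool × Bool × Bool))
    (hs : s ∩ {ω | Z ω = false} = W ⁻¹' S ∩ {ω | Z ω = false}) :
    cPr μ s {ω | Z ω = false} = Pr μ (W ⁻¹' S) := by
  have hS : MeasurableSet S := S.to_countable.measurableSet
  have hZset : {ω | Z ω = false} = Z ⁻¹' {false} := rfl
  have hkey : μ (Z ⁻¹' {false} ∩ W ⁻¹' S) = μ (Z ⁻¹' {false}) * μ (W ⁻¹' S) :=
    hind.measure_inter_preimage_eq_mul {false} S (MeasurableSet.singleton false) hS
  rw [cPr, hs]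
  rw [Pr, Pr, Pr, Set.inter_comm, hZset, hkey, ENNReal.toReal_mul]
  have hne : (μ (Z ⁻¹' {false})).toReal ≠ 0 := by
    rw [Pr, hZset] at hZ0; exact ne_of_gt hZ0
  field_simp

/-- Decomposition of the risk difference between the AI-alone
system (decision A) and the human-alone system (decision D(0)). -/
theorem stmt5 {Ω : Type*} [MeasurableSpace Ω] (μ : Measure Ω) [IsProbabilityMeasure μ]
    (Y0 Y A Z : Ω → Bool) (Dp : Bool → Ω → Bool) (D : Ω → Bool)
    (hY0 : Measurable Y0) (hY : Measurable Y) (hA : Measurable A) (hZ : Measurable Z)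
    (hDp : ∀ z, Measurable (Dp z))
    (hDdef : ∀ ω, D ω = Dp (Z ω) ω)
    (hblind : ∀ ω, D ω = false → Y ω = Y0 ω)
    (hind : IndepFun Z (fun ω => (Y0 ω, A ω, Dp false ω, Dp true ω)) μ)
    (hZ0 : 0 < Pr μ {ω | Z ω = false}) (hZ1 : 0 < Pr μ {ω | Z ω = true})
    (ℓ : ℝ) (hℓ : 0 ≤ ℓ)
    (RAI RHuman : ℝ)
    (hRAI : RAI = Pr μ {ω | Y0 ω = true ∧ A ω = false}
        + ℓ * Pr μ {ω | Y0 ω = false ∧ A ω = true})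
    (hRHuman : RHuman = Pr μ {ω | Y0 ω = true ∧ Dp false ω = false}
        + ℓ * Pr μ {ω | Y0 ω = false ∧ Dp false ω = true}) :
    RAI - RHuman =
      (1 + ℓ) * (Pr μ {ω | Y0 ω = true ∧ Dp false ω = true ∧ A ω = false}
        - cPr μ {ω | Y ω = true ∧ D ω = false ∧ A ω = true} {ω | Z ω = false})
      + ℓ * (cPr μ {ω | D ω = false ∧ A ω = true} {ω | Z ω = false}
        - cPr μ {ω | D ω = true ∧ A ω = false} {ω | Z ω = false}) := by
  set W : Ω → Bool × Bool × Bool × Bool := fun ω => (Y0 ω, A ω, Dp false ω, Dp true ω) with hW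
  -- atoms
  set e : Bool → Bool → Bool → ℝ := fun y d a =>
    Pr μ {ω | Y0 ω = y ∧ Dp false ω = d ∧ A ω = a} with he
  -- conditional probabilities
  have hD0 : ∀ ω, Z ω = false → D ω = Dp false ω := by
    intro ω h; rw [hDdef ω, h]
  have hc1 : cPr μ {ω | Y ω = true ∧ D ω = false ∧ A ω = true} {ω | Z ω = false}
      = e true false true := by
    rw [cPr_indep μ Z W hind hZ0 _
      {p | p.1 = true ∧ p.2.2.1 = false ∧ p.2.1 = true}]
    · rw [he]
      congr 1
    · ext ω
      simp only [Set.mem_inter_iff, Set.mem_setOf_eq, Set.mem_preimage, hW]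
      constructor
      · rintro ⟨⟨hy, hd, ha⟩, hz⟩
        have hdd := hD0 ω hz
        rw [hdd] at hd
        have := hblind ω (by rw [hD0 ω hz]; exact hd)
        exact ⟨⟨this ▸ hy, hd, ha⟩, hz⟩
      · rintro ⟨⟨hy, hd, ha⟩, hz⟩
        have hdd : D ω = false := by rw [hD0 ω hz]; exact hd
        have := hblind ω hdd
        exact ⟨⟨this ▸ hy, hdd, ha⟩, hz⟩
  have hc2 : cPr μ {ω | D ω = false ∧ A ω = true} {ω | Z ω = false}
      = Pr μ {ω | Dp false ω = false ∧ A ω = true} := by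
    rw [cPr_indep μ Z W hind hZ0 _ {p | p.2.2.1 = false ∧ p.2.1 = true}]
    · congr 1
    · ext ω
      simp only [Set.mem_inter_iff, Set.mem_setOf_eq, Set.mem_preimage, hW]
      constructor
      · rintro ⟨⟨hd, ha⟩, hz⟩; exact ⟨⟨hD0 ω hz ▸ hd, ha⟩, hz⟩
      · rintro ⟨⟨hd, ha⟩, hz⟩; exact ⟨⟨(hD0 ω hz).symm ▸ hd, ha⟩, hz⟩
  have hc3 : cPr μ {ω | D ω = true ∧ A ω = false} {ω | Z ω = false}
      = Pr μ {ω | Dp false ω = true ∧ A ω = false} := by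
    rw [cPr_indep μ Z W hind hZ0 _ {p | p.2.2.1 = true ∧ p.2.1 = false}]
    · congr 1
    · ext ω
      simp only [Set.mem_inter_iff, Set.mem_setOf_eq, Set.mem_preimage, hW]
      constructor
      · rintro ⟨⟨hd, ha⟩, hz⟩; exact ⟨⟨hD0 ω hz ▸ hd, ha⟩, hz⟩
      · rintro ⟨⟨hd, ha⟩, hz⟩; exact ⟨⟨(hD0 ω hz).symm ▸ hd, ha⟩, hz⟩
  -- splitting identities
  have meas2 : ∀ (f g : Ω → Bool), Measurable f → Measurable g → ∀ (u v : Bool),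
      MeasurableSet {ω | f ω = u ∧ g ω = v} := by
    intro f g hf hg u v
    exact (hf (MeasurableSet.singleton u)).inter (hg (MeasurableSet.singleton v))
  have hsplit : ∀ (f g b : Ω → Bool), Measurable f → Measurable g → Measurable b →
      ∀ (u v : Bool), Pr μ {ω | f ω = u ∧ g ω = v}
        = Pr μ ({ω | f ω = u ∧ g ω = v} ∩ {ω | b ω = true})
          + Pr μ ({ω | f ω = u ∧ g ω = v} ∩ {ω | b ω = false}) := by
    intro f g b hf hg hb u v
    exact Pr_split μ (meas2 f g hf hg u v) hb
  have h1 : Pr μ {ω | Y0 ω = true ∧ A ω = false} = e true true false + e true false false := by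
    rw [hsplit Y0 A (Dp false) hY0 hA (hDp false) true false, he]
    congr 1 <;> · congr 1; ext ω; simp only [Set.mem_inter_iff, Set.mem_setOf_eq]; tauto
  have h2 : Pr μ {ω | Y0 ω = true ∧ Dp false ω = false}
      = e true false false + e true false true := by
    rw [hsplit Y0 (Dp false) A hY0 (hDp false) hA true false, he]
    have := add_comm (Pr μ ({ω | Y0 ω = true ∧ Dp false ω = false} ∩ {ω | A ω = true}))
      (Pr μ ({ω | Y0 ω = true ∧ Dp false ω = false} ∩ {ω | A ω = false}))
    rw [add_comm]
    congr 1 <;> · congr 1; ext ω; simp only [Set.mem_inter_iff, Set.mem_setOf_eq]; tauto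
  have h3 : Pr μ {ω | Y0 ω = false ∧ A ω = true} = e false true true + e false false true := by
    rw [hsplit Y0 A (Dp false) hY0 hA (hDp false) false true, he]
    congr 1 <;> · congr 1; ext ω; simp only [Set.mem_inter_iff, Set.mem_setOf_eq]; tauto
  have h4 : Pr μ {ω | Y0 ω = false ∧ Dp false ω = true}
      = e false true true + e false true false := by
    rw [hsplit Y0 (Dp false) A hY0 (hDp false) hA false true, he]
    congr 1 <;> · congr 1; ext ω; simp only [Set.mem_inter_iff, Set.mem_setOf_eq]; tauto
  have h5 : Pr μ {ω | Dp false ω = false ∧ A ω = true}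
      = e true false true + e false false true := by
    rw [hsplit (Dp false) A Y0 (hDp false) hA hY0 false true, he]
    congr 1 <;> · congr 1; ext ω; simp only [Set.mem_inter_iff, Set.mem_setOf_eq]; tauto
  have h6 : Pr μ {ω | Dp false ω = true ∧ A ω = false}
      = e true true false + e false true false := by
    rw [hsplit (Dp false) A Y0 (hDp false) hA hY0 true false, he]
    congr 1 <;> · congr 1; ext ω; simp only [Set.mem_inter_iff, Set.mem_setOf_eq]; tauto
  have h7 : Pr μ {ω | Y0 ω = true ∧ Dp false ω = true ∧ A ω = false} = e true true false := rfl
  rw [hRAI, hRHuman, hc1, hc2, hc3, h1, h2, h3, h4, h5, h6, h7]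
  ring
end

section
/- Let Y0, A, Z ∈ {0,1}, potential decisions D(0), D(1) ∈ {0,1}, with Z independent of (Y0, A, D(0), D(1)), D = D(Z), Y = Y0 on {D = 0}, and P(Z = 0), P(Z = 1) > 0. With ℓ ≥ 0, R_AI(ℓ) = P(Y0=1, A=0) + ℓ·P(Y0=0, A=1), and R_Human(ℓ) = P(Y0=1, D(0)=0) + ℓ·P(Y0=0, D(0)=1), it holds that R_AI(ℓ) − R_Human(ℓ) ≥ (1+ℓ)·[max_{z'} P(Y=1, D=0, A=0 | Z=z') − P(Y=1, D=0 | Z=0)] + ℓ·[P(D=0, A=1 | Z=0) − P(D=1, A=0 | Z=0)]. -/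
open MeasureTheory ProbabilityTheory

lemma pr_mono {Ω : Type*} [MeasurableSpace Ω] (μ : Measure Ω) [IsProbabilityMeasure μ]
    {s t : Set Ω} (h : s ⊆ t) : Pr μ s ≤ Pr μ t :=
  ENNReal.toReal_mono (measure_ne_top μ t) (measure_mono h)

lemma pr_congr {Ω : Type*} [MeasurableSpace Ω] (μ : Measure Ω) {s t : Set Ω} (h : s = t) :
    Pr μ s = Pr μ t := by rw [h]

lemma meas2 {Ω : Type*} [MeasurableSpace Ω] (f g : Ω → Bool) (hf : Measurable f)
    (hg : Measurable g) (u v : Bool) : MeasurableSet {ω | f ω = u ∧ g ω = v} := by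
  have : {ω | f ω = u ∧ g ω = v} = f ⁻¹' {u} ∩ g ⁻¹' {v} := by ext ω; simp
  rw [this]
  exact (hf (measurableSet_singleton u)).inter (hg (measurableSet_singleton v))

lemma pr_split {Ω : Type*} [MeasurableSpace Ω] (μ : Measure Ω) [IsProbabilityMeasure μ]
    (S T₁ T₂ : Set Ω) (hS : MeasurableSet S) (f : Ω → Bool) (hf : Measurable f)
    (h1 : S ∩ {ω | f ω = false} = T₁) (h2 : S ∩ {ω | f ω = true} = T₂) :
    Pr μ S = Pr μ T₁ + Pr μ T₂ := by
  have hT : MeasurableSet {ω | f ω = true} := hf (measurableSet_singleton true)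
  have hdiff : S ∩ {ω | f ω = false} = S \ {ω | f ω = true} := by
    ext ω; simp [Set.mem_diff]
  rw [← h1, ← h2, hdiff]
  unfold Pr
  rw [← ENNReal.toReal_add (measure_ne_top μ _) (measure_ne_top μ _)]
  congr 1
  rw [add_comm]
  exact (measure_inter_add_diff S hT).symm

/-- Sharp lower bound on R_AI(ℓ) − R_Human(ℓ). -/
theorem stmt6 {Ω : Type*} [MeasurableSpace Ω] (μ : Measure Ω) [IsProbabilityMeasure μ]
    (Y0 Y A Z : Ω → Bool) (Dp : Bool → Ω → Bool) (D : Ω → Bool)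
    (hY0 : Measurable Y0) (hY : Measurable Y) (hA : Measurable A) (hZ : Measurable Z)
    (hDp : ∀ z, Measurable (Dp z))
    (hDdef : ∀ ω, D ω = Dp (Z ω) ω)
    (hblind : ∀ ω, D ω = false → Y ω = Y0 ω)
    (hind : IndepFun Z (fun ω => (Y0 ω, A ω, Dp false ω, Dp true ω)) μ)
    (hZ0 : 0 < Pr μ {ω | Z ω = false}) (hZ1 : 0 < Pr μ {ω | Z ω = true})
    (ℓ : ℝ) (hℓ : 0 ≤ ℓ)
    (RAI RHuman : ℝ)
    (hRAI : RAI = Pr μ {ω | Y0 ω = true ∧ A ω = false}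
        + ℓ * Pr μ {ω | Y0 ω = false ∧ A ω = true})
    (hRHuman : RHuman = Pr μ {ω | Y0 ω = true ∧ Dp false ω = false}
        + ℓ * Pr μ {ω | Y0 ω = false ∧ Dp false ω = true}) :
    RAI - RHuman ≥
      (1 + ℓ) * (max (cPr μ {ω | Y ω = true ∧ D ω = false ∧ A ω = false} {ω | Z ω = true})
                     (cPr μ {ω | Y ω = true ∧ D ω = false ∧ A ω = false} {ω | Z ω = false})
        - cPr μ {ω | Y ω = true ∧ D ω = false} {ω | Z ω = false})
      + ℓ * (cPr μ {ω | D ω = false ∧ A ω = true} {ω | Z ω = false}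
        - cPr μ {ω | D ω = true ∧ A ω = false} {ω | Z ω = false}) := by
  classical
  set W : Ω → Bool × Bool × Bool × Bool := fun ω => (Y0 ω, A ω, Dp false ω, Dp true ω) with hW
  -- key conditioning lemma
  have cond : ∀ (z : Bool), 0 < Pr μ {ω | Z ω = z} →
      ∀ (S : Set Ω) (t : Set (Bool × Bool × Bool × Bool)),
      S ∩ {ω | Z ω = z} = W ⁻¹' t ∩ {ω | Z ω = z} →
      cPr μ S {ω | Z ω = z} = Pr μ (W ⁻¹' t) := by
    intro z hz S t hst
    have hts : {ω | Z ω = z} = Z ⁻¹' {z} := by ext ω; simp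
    have hmul : μ (Z ⁻¹' {z} ∩ W ⁻¹' t) = μ (Z ⁻¹' {z}) * μ (W ⁻¹' t) :=
      hind.measure_inter_preimage_eq_mul {z} t (measurableSet_singleton z)
        (t.to_countable.measurableSet)
    unfold cPr Pr
    rw [hst, hts, Set.inter_comm, hmul, ENNReal.toReal_mul]
    rw [hts] at hz
    exact mul_div_cancel_left₀ _ (ne_of_gt hz)
  -- the four conditional probabilities as unconditional ones
  have hξ1 : cPr μ {ω | Y ω = true ∧ D ω = false ∧ A ω = false} {ω | Z ω = true}
      = Pr μ {ω | Y0 ω = true ∧ Dp true ω = false ∧ A ω = false} := by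
    have := cond true hZ1 {ω | Y ω = true ∧ D ω = false ∧ A ω = false}
        {p : Bool × Bool × Bool × Bool | p.1 = true ∧ p.2.2.2 = false ∧ p.2.1 = false} ?_
    · rw [this]; rfl
    · ext ω
      simp only [Set.mem_inter_iff, Set.mem_setOf_eq, Set.mem_preimage, hW]
      constructor
      · rintro ⟨⟨hy, hd, ha⟩, hzω⟩
        have h' := hDdef ω
        rw [hzω] at h'
        have hDz : Dp true ω = false := by rw [← h']; exact hd
        exact ⟨⟨by rw [← hblind ω hd]; exact hy, hDz, ha⟩, hzω⟩
      · rintro ⟨⟨hy, hd, ha⟩, hzω⟩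
        have h' := hDdef ω
        rw [hzω] at h'
        have hD : D ω = false := by rw [h']; exact hd
        exact ⟨⟨by rw [hblind ω hD]; exact hy, hD, ha⟩, hzω⟩
  have hξ0 : cPr μ {ω | Y ω = true ∧ D ω = false ∧ A ω = false} {ω | Z ω = false}
      = Pr μ {ω | Y0 ω = true ∧ Dp false ω = false ∧ A ω = false} := by
    have := cond false hZ0 {ω | Y ω = true ∧ D ω = false ∧ A ω = false}
        {p : Bool × Bool × Bool × Bool | p.1 = true ∧ p.2.2.1 = false ∧ p.2.1 = false} ?_
    · rw [this]; rfl
    · ext ω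
      simp only [Set.mem_inter_iff, Set.mem_setOf_eq, Set.mem_preimage, hW]
      constructor
      · rintro ⟨⟨hy, hd, ha⟩, hzω⟩
        have h' := hDdef ω
        rw [hzω] at h'
        have hDz : Dp false ω = false := by rw [← h']; exact hd
        exact ⟨⟨by rw [← hblind ω hd]; exact hy, hDz, ha⟩, hzω⟩
      · rintro ⟨⟨hy, hd, ha⟩, hzω⟩
        have h' := hDdef ω
        rw [hzω] at h'
        have hD : D ω = false := by rw [h']; exact hd
        exact ⟨⟨by rw [hblind ω hD]; exact hy, hD, ha⟩, hzω⟩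
  have hq : cPr μ {ω | Y ω = true ∧ D ω = false} {ω | Z ω = false}
      = Pr μ {ω | Y0 ω = true ∧ Dp false ω = false} := by
    have := cond false hZ0 {ω | Y ω = true ∧ D ω = false}
        {p : Bool × Bool × Bool × Bool | p.1 = true ∧ p.2.2.1 = false} ?_
    · rw [this]; rfl
    · ext ω
      simp only [Set.mem_inter_iff, Set.mem_setOf_eq, Set.mem_preimage, hW]
      constructor
      · rintro ⟨⟨hy, hd⟩, hzω⟩
        have h' := hDdef ω
        rw [hzω] at h'
        have hDz : Dp false ω = false := by rw [← h']; exact hd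
        exact ⟨⟨by rw [← hblind ω hd]; exact hy, hDz⟩, hzω⟩
      · rintro ⟨⟨hy, hd⟩, hzω⟩
        have h' := hDdef ω
        rw [hzω] at h'
        have hD : D ω = false := by rw [h']; exact hd
        exact ⟨⟨by rw [hblind ω hD]; exact hy, hD⟩, hzω⟩
  have hr : cPr μ {ω | D ω = false ∧ A ω = true} {ω | Z ω = false}
      = Pr μ {ω | Dp false ω = false ∧ A ω = true} := by
    have := cond false hZ0 {ω | D ω = false ∧ A ω = true}
        {p : Bool × Bool × Bool × Bool | p.2.2.1 = false ∧ p.2.1 = true} ?_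
    · rw [this]; rfl
    · ext ω
      simp only [Set.mem_inter_iff, Set.mem_setOf_eq, Set.mem_preimage, hW]
      constructor
      · rintro ⟨⟨hd, ha⟩, hzω⟩
        have h' := hDdef ω
        rw [hzω] at h'
        exact ⟨⟨by rw [← h']; exact hd, ha⟩, hzω⟩
      · rintro ⟨⟨hd, ha⟩, hzω⟩
        have h' := hDdef ω
        rw [hzω] at h'
        exact ⟨⟨by rw [h']; exact hd, ha⟩, hzω⟩
  have hs : cPr μ {ω | D ω = true ∧ A ω = false} {ω | Z ω = false}
      = Pr μ {ω | Dp false ω = true ∧ A ω = false} := by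
    have := cond false hZ0 {ω | D ω = true ∧ A ω = false}
        {p : Bool × Bool × Bool × Bool | p.2.2.1 = true ∧ p.2.1 = false} ?_
    · rw [this]; rfl
    · ext ω
      simp only [Set.mem_inter_iff, Set.mem_setOf_eq, Set.mem_preimage, hW]
      constructor
      · rintro ⟨⟨hd, ha⟩, hzω⟩
        have h' := hDdef ω
        rw [hzω] at h'
        exact ⟨⟨by rw [← h']; exact hd, ha⟩, hzω⟩
      · rintro ⟨⟨hd, ha⟩, hzω⟩
        have h' := hDdef ω
        rw [hzω] at h'
        exact ⟨⟨by rw [h']; exact hd, ha⟩, hzω⟩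
  -- monotonicity bounds
  have hm1 : Pr μ {ω | Y0 ω = true ∧ Dp true ω = false ∧ A ω = false}
      ≤ Pr μ {ω | Y0 ω = true ∧ A ω = false} :=
    pr_mono μ (fun ω h => ⟨h.1, h.2.2⟩)
  have hm0 : Pr μ {ω | Y0 ω = true ∧ Dp false ω = false ∧ A ω = false}
      ≤ Pr μ {ω | Y0 ω = true ∧ A ω = false} :=
    pr_mono μ (fun ω h => ⟨h.1, h.2.2⟩)
  -- atom decompositions (atoms in order Y0, A, Dp false)
  have sa : Pr μ {ω | Y0 ω = true ∧ A ω = false}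
      = Pr μ {ω | Y0 ω = true ∧ A ω = false ∧ Dp false ω = false}
      + Pr μ {ω | Y0 ω = true ∧ A ω = false ∧ Dp false ω = true} :=
    pr_split μ _ _ _ (meas2 Y0 A hY0 hA true false) (Dp false) (hDp false)
      (by ext ω; simp only [Set.mem_inter_iff, Set.mem_setOf_eq]; tauto)
      (by ext ω; simp only [Set.mem_inter_iff, Set.mem_setOf_eq]; tauto)
  have sb : Pr μ {ω | Y0 ω = false ∧ A ω = true}
      = Pr μ {ω | Y0 ω = false ∧ A ω = true ∧ Dp false ω = false}
      + Pr μ {ω | Y0 ω = false ∧ A ω = true ∧ Dp false ω = true} :=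
    pr_split μ _ _ _ (meas2 Y0 A hY0 hA false true) (Dp false) (hDp false)
      (by ext ω; simp only [Set.mem_inter_iff, Set.mem_setOf_eq]; tauto)
      (by ext ω; simp only [Set.mem_inter_iff, Set.mem_setOf_eq]; tauto)
  have sq : Pr μ {ω | Y0 ω = true ∧ Dp false ω = false}
      = Pr μ {ω | Y0 ω = true ∧ A ω = false ∧ Dp false ω = false}
      + Pr μ {ω | Y0 ω = true ∧ A ω = true ∧ Dp false ω = false} :=
    pr_split μ _ _ _ (meas2 Y0 (Dp false) hY0 (hDp false) true false) A hA
      (by ext ω; simp only [Set.mem_inter_iff, Set.mem_setOf_eq]; tauto)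
      (by ext ω; simp only [Set.mem_inter_iff, Set.mem_setOf_eq]; tauto)
  have sd : Pr μ {ω | Y0 ω = false ∧ Dp false ω = true}
      = Pr μ {ω | Y0 ω = false ∧ A ω = false ∧ Dp false ω = true}
      + Pr μ {ω | Y0 ω = false ∧ A ω = true ∧ Dp false ω = true} :=
    pr_split μ _ _ _ (meas2 Y0 (Dp false) hY0 (hDp false) false true) A hA
      (by ext ω; simp only [Set.mem_inter_iff, Set.mem_setOf_eq]; tauto)
      (by ext ω; simp only [Set.mem_inter_iff, Set.mem_setOf_eq]; tauto)
  have sr : Pr μ {ω | Dp false ω = false ∧ A ω = true}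
      = Pr μ {ω | Y0 ω = false ∧ A ω = true ∧ Dp false ω = false}
      + Pr μ {ω | Y0 ω = true ∧ A ω = true ∧ Dp false ω = false} :=
    pr_split μ _ _ _ (meas2 (Dp false) A (hDp false) hA false true) Y0 hY0
      (by ext ω; simp only [Set.mem_inter_iff, Set.mem_setOf_eq]; tauto)
      (by ext ω; simp only [Set.mem_inter_iff, Set.mem_setOf_eq]; tauto)
  have ss : Pr μ {ω | Dp false ω = true ∧ A ω = false}
      = Pr μ {ω | Y0 ω = false ∧ A ω = false ∧ Dp false ω = true}
      + Pr μ {ω | Y0 ω = true ∧ A ω = false ∧ Dp false ω = true} :=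
    pr_split μ _ _ _ (meas2 (Dp false) A (hDp false) hA true false) Y0 hY0
      (by ext ω; simp only [Set.mem_inter_iff, Set.mem_setOf_eq]; tauto)
      (by ext ω; simp only [Set.mem_inter_iff, Set.mem_setOf_eq]; tauto)
  -- finish
  rw [hξ1, hξ0, hq, hr, hs, hRAI, hRHuman]
  have hM : max (Pr μ {ω | Y0 ω = true ∧ Dp true ω = false ∧ A ω = false})
      (Pr μ {ω | Y0 ω = true ∧ Dp false ω = false ∧ A ω = false})
      ≤ Pr μ {ω | Y0 ω = true ∧ A ω = false} := max_le hm1 hm0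
  nlinarith [mul_nonneg hℓ (sub_nonneg.mpr hM), sa, sb, sq, sd, sr, ss]
end

section
/- Under the same setup (Z independent of (Y0, A, D(0), D(1)), D = D(Z), Y = Y0 on {D = 0}, P(Z=0), P(Z=1) > 0, ℓ ≥ 0): R_AI(ℓ) − R_Human(ℓ) ≤ (1+ℓ)·[P(A=0) − P(Y=1, D=0 | Z=0) − max_{z'} P(Y=0, D=0, A=0 | Z=z')] + ℓ·[P(D=0, A=1 | Z=0) − P(D=1, A=0 | Z=0)]. -/
open MeasureTheory ProbabilityTheory

/-- Atom events in Bool⁴ = (Y0, A, D0, D1): Y0 = y, D0 = d, A = a. -/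
def S7 (y d a : Bool) : Set (Bool × Bool × Bool × Bool) :=
  {p | p.1 = y ∧ p.2.2.1 = d ∧ p.2.1 = a}

set_option maxRecDepth 8000 in
/-- Sharp upper bound on R_AI(ℓ) − R_Human(ℓ). -/
theorem stmt7 {Ω : Type*} [MeasurableSpace Ω] (μ : Measure Ω) [IsProbabilityMeasure μ]
    (Y0 Y A Z : Ω → Bool) (Dp : Bool → Ω → Bool) (D : Ω → Bool)
    (hY0 : Measurable Y0) (hY : Measurable Y) (hA : Measurable A) (hZ : Measurable Z)
    (hDp : ∀ z, Measurable (Dp z))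
    (hDdef : ∀ ω, D ω = Dp (Z ω) ω)
    (hblind : ∀ ω, D ω = false → Y ω = Y0 ω)
    (hind : IndepFun Z (fun ω => (Y0 ω, A ω, Dp false ω, Dp true ω)) μ)
    (hZ0 : 0 < Pr μ {ω | Z ω = false}) (hZ1 : 0 < Pr μ {ω | Z ω = true})
    (ℓ : ℝ) (hℓ : 0 ≤ ℓ)
    (RAI RHuman : ℝ)
    (hRAI : RAI = Pr μ {ω | Y0 ω = true ∧ A ω = false}
        + ℓ * Pr μ {ω | Y0 ω = false ∧ A ω = true})
    (hRHuman : RHuman = Pr μ {ω | Y0 ω = true ∧ Dp false ω = false}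
        + ℓ * Pr μ {ω | Y0 ω = false ∧ Dp false ω = true}) :
    RAI - RHuman ≤
      (1 + ℓ) * (Pr μ {ω | A ω = false}
        - cPr μ {ω | Y ω = true ∧ D ω = false} {ω | Z ω = false}
        - max (cPr μ {ω | Y ω = false ∧ D ω = false ∧ A ω = false} {ω | Z ω = true})
              (cPr μ {ω | Y ω = false ∧ D ω = false ∧ A ω = false} {ω | Z ω = false}))
      + ℓ * (cPr μ {ω | D ω = false ∧ A ω = true} {ω | Z ω = false}
        - cPr μ {ω | D ω = true ∧ A ω = false} {ω | Z ω = false}) := by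
  classical
  set W : Ω → Bool × Bool × Bool × Bool := fun ω => (Y0 ω, A ω, Dp false ω, Dp true ω)
    with hWdef
  have hW : Measurable W := hY0.prodMk (hA.prodMk ((hDp false).prodMk (hDp true)))
  set P : Set (Bool × Bool × Bool × Bool) → ℝ := fun t => Pr μ (W ⁻¹' t) with hPdef
  have Pnonneg : ∀ t, 0 ≤ P t := fun t => ENNReal.toReal_nonneg
  have Pmono : ∀ {t₁ t₂ : Set (Bool × Bool × Bool × Bool)}, t₁ ⊆ t₂ → P t₁ ≤ P t₂ := by
    intro t₁ t₂ h
    exact ENNReal.toReal_mono (measure_ne_top μ _) (measure_mono (Set.preimage_mono h))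
  have Padd : ∀ t₁ t₂ : Set (Bool × Bool × Bool × Bool), Disjoint t₁ t₂ →
      P (t₁ ∪ t₂) = P t₁ + P t₂ := by
    intro t₁ t₂ h
    have h2 : MeasurableSet (W ⁻¹' t₂) := hW (Set.toFinite t₂).measurableSet
    simp only [hPdef, Pr, Set.preimage_union]
    rw [measure_union (h.preimage W) h2,
      ENNReal.toReal_add (measure_ne_top μ _) (measure_ne_top μ _)]
  have key : ∀ (t : Set (Bool × Bool × Bool × Bool)) (z : Bool),
      Pr μ (W ⁻¹' t ∩ {ω | Z ω = z}) = P t * Pr μ {ω | Z ω = z} := by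
    intro t z
    have h := hind.measure_inter_preimage_eq_mul ({z} : Set Bool) t
      (measurableSet_singleton z) (Set.toFinite t).measurableSet
    have hzs : {ω | Z ω = z} = Z ⁻¹' {z} := rfl
    simp only [hPdef, Pr, hzs]
    rw [Set.inter_comm, h, ENNReal.toReal_mul, mul_comm]
  -- conditional probabilities reduce to unconditional ones
  have ckey : ∀ (s : Set Ω) (t : Set (Bool × Bool × Bool × Bool)) (z : Bool),
      0 < Pr μ {ω | Z ω = z} →
      (s ∩ {ω | Z ω = z} = W ⁻¹' t ∩ {ω | Z ω = z}) →
      cPr μ s {ω | Z ω = z} = P t := by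
    intro s t z hz hset
    unfold cPr
    rw [hset, key, mul_div_assoc, div_self (ne_of_gt hz), mul_one]
  have c1 : cPr μ {ω | Y ω = true ∧ D ω = false} {ω | Z ω = false}
      = P {p | p.1 = true ∧ p.2.2.1 = false} := by
    apply ckey _ _ _ hZ0
    ext ω
    simp only [Set.mem_inter_iff, Set.mem_setOf_eq, Set.mem_preimage, hWdef]
    constructor
    · rintro ⟨⟨hy, hd⟩, hz⟩
      have hd0 : Dp false ω = false := by rw [hDdef, hz] at hd; exact hd
      refine ⟨⟨?_, hd0⟩, hz⟩
      rw [← hblind ω hd]; exact hy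
    · rintro ⟨⟨hy0, hd0⟩, hz⟩
      have hd : D ω = false := by rw [hDdef, hz]; exact hd0
      exact ⟨⟨by rw [hblind ω hd]; exact hy0, hd⟩, hz⟩
  have c2 : cPr μ {ω | Y ω = false ∧ D ω = false ∧ A ω = false} {ω | Z ω = true}
      = P {p | p.1 = false ∧ p.2.2.2 = false ∧ p.2.1 = false} := by
    apply ckey _ _ _ hZ1
    ext ω
    simp only [Set.mem_inter_iff, Set.mem_setOf_eq, Set.mem_preimage, hWdef]
    constructor
    · rintro ⟨⟨hy, hd, ha⟩, hz⟩
      have hd1 : Dp true ω = false := by rw [hDdef, hz] at hd; exact hd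
      refine ⟨⟨?_, hd1, ha⟩, hz⟩
      rw [← hblind ω hd]; exact hy
    · rintro ⟨⟨hy0, hd1, ha⟩, hz⟩
      have hd : D ω = false := by rw [hDdef, hz]; exact hd1
      exact ⟨⟨by rw [hblind ω hd]; exact hy0, hd, ha⟩, hz⟩
  have c3 : cPr μ {ω | Y ω = false ∧ D ω = false ∧ A ω = false} {ω | Z ω = false}
      = P (S7 false false false) := by
    apply ckey _ _ _ hZ0
    ext ω
    simp only [Set.mem_inter_iff, Set.mem_setOf_eq, Set.mem_preimage, hWdef, S7]
    constructor
    · rintro ⟨⟨hy, hd, ha⟩, hz⟩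
      have hd0 : Dp false ω = false := by rw [hDdef, hz] at hd; exact hd
      refine ⟨⟨?_, hd0, ha⟩, hz⟩
      rw [← hblind ω hd]; exact hy
    · rintro ⟨⟨hy0, hd0, ha⟩, hz⟩
      have hd : D ω = false := by rw [hDdef, hz]; exact hd0
      exact ⟨⟨by rw [hblind ω hd]; exact hy0, hd, ha⟩, hz⟩
  have c4 : cPr μ {ω | D ω = false ∧ A ω = true} {ω | Z ω = false}
      = P {p | p.2.2.1 = false ∧ p.2.1 = true} := by
    apply ckey _ _ _ hZ0
    ext ω
    simp only [Set.mem_inter_iff, Set.mem_setOf_eq, Set.mem_preimage, hWdef]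
    constructor
    · rintro ⟨⟨hd, ha⟩, hz⟩
      have hd0 : Dp false ω = false := by rw [hDdef, hz] at hd; exact hd
      exact ⟨⟨hd0, ha⟩, hz⟩
    · rintro ⟨⟨hd0, ha⟩, hz⟩
      exact ⟨⟨by rw [hDdef, hz]; exact hd0, ha⟩, hz⟩
  have c5 : cPr μ {ω | D ω = true ∧ A ω = false} {ω | Z ω = false}
      = P {p | p.2.2.1 = true ∧ p.2.1 = false} := by
    apply ckey _ _ _ hZ0
    ext ω
    simp only [Set.mem_inter_iff, Set.mem_setOf_eq, Set.mem_preimage, hWdef]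
    constructor
    · rintro ⟨⟨hd, ha⟩, hz⟩
      have hd0 : Dp false ω = true := by rw [hDdef, hz] at hd; exact hd
      exact ⟨⟨hd0, ha⟩, hz⟩
    · rintro ⟨⟨hd0, ha⟩, hz⟩
      exact ⟨⟨by rw [hDdef, hz]; exact hd0, ha⟩, hz⟩
  -- unconditional probabilities as P of sets
  have u1 : Pr μ {ω | Y0 ω = true ∧ A ω = false} = P {p | p.1 = true ∧ p.2.1 = false} := rfl
  have u2 : Pr μ {ω | Y0 ω = false ∧ A ω = true} = P {p | p.1 = false ∧ p.2.1 = true} := rfl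
  have u3 : Pr μ {ω | Y0 ω = true ∧ Dp false ω = false}
      = P {p | p.1 = true ∧ p.2.2.1 = false} := rfl
  have u4 : Pr μ {ω | Y0 ω = false ∧ Dp false ω = true}
      = P {p | p.1 = false ∧ p.2.2.1 = true} := rfl
  have u5 : Pr μ {ω | A ω = false} = P {p | p.2.1 = false} := rfl
  -- decompositions into atoms
  have dis : ∀ y a y' a', Disjoint (S7 y false a) (S7 y' true a') := by
    intro y a y' a'
    rw [Set.disjoint_left]
    rintro ⟨b1, b2, b3, b4⟩ ⟨-, h, -⟩ ⟨-, h', -⟩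
    simp at h; rw [h] at h'; exact Bool.false_ne_true h'
  have hA0 : P {p | p.1 = true ∧ p.2.1 = false}
      = P (S7 true false false) + P (S7 true true false) := by
    rw [← Padd _ _ (dis _ _ _ _)]
    congr 1
    ext ⟨b1, b2, b3, b4⟩
    cases b3 <;> simp [S7]
  have hB : P {p | p.1 = false ∧ p.2.1 = true}
      = P (S7 false false true) + P (S7 false true true) := by
    rw [← Padd _ _ (dis _ _ _ _)]
    congr 1
    ext ⟨b1, b2, b3, b4⟩
    cases b3 <;> simp [S7]
  have hC : P {p | p.1 = true ∧ p.2.2.1 = false}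
      = P (S7 true false false) + P (S7 true false true) := by
    have hd : Disjoint (S7 true false false) (S7 true false true) := by
      rw [Set.disjoint_left]
      rintro ⟨b1, b2, b3, b4⟩ ⟨-, -, h⟩ ⟨-, -, h'⟩
      simp at h; rw [h] at h'; exact Bool.false_ne_true h'
    rw [← Padd _ _ hd]
    congr 1
    ext ⟨b1, b2, b3, b4⟩
    cases b2 <;> simp [S7]
  have hD : P {p | p.1 = false ∧ p.2.2.1 = true}
      = P (S7 false true false) + P (S7 false true true) := by
    have hd : Disjoint (S7 false true false) (S7 false true true) := by
      rw [Set.disjoint_left]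
      rintro ⟨b1, b2, b3, b4⟩ ⟨-, -, h⟩ ⟨-, -, h'⟩
      simp at h; rw [h] at h'; exact Bool.false_ne_true h'
    rw [← Padd _ _ hd]
    congr 1
    ext ⟨b1, b2, b3, b4⟩
    cases b2 <;> simp [S7]
  have hE0 : P {p | p.1 = false ∧ p.2.1 = false}
      = P (S7 false false false) + P (S7 false true false) := by
    rw [← Padd _ _ (dis _ _ _ _)]
    congr 1
    ext ⟨b1, b2, b3, b4⟩
    cases b3 <;> simp [S7]
  have hE : P {p | p.2.1 = false}
      = (P (S7 false false false) + P (S7 false true false))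
        + (P (S7 true false false) + P (S7 true true false)) := by
    rw [← hE0, ← hA0]
    have hd : Disjoint {p : Bool × Bool × Bool × Bool | p.1 = false ∧ p.2.1 = false}
        {p : Bool × Bool × Bool × Bool | p.1 = true ∧ p.2.1 = false} := by
      rw [Set.disjoint_left]
      rintro ⟨b1, b2, b3, b4⟩ ⟨h, -⟩ ⟨h', -⟩
      simp at h; rw [h] at h'; exact Bool.false_ne_true h'
    rw [← Padd _ _ hd]
    congr 1
    ext ⟨b1, b2, b3, b4⟩
    cases b1 <;> simp
  have hF : P {p | p.2.2.1 = false ∧ p.2.1 = true}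
      = P (S7 false false true) + P (S7 true false true) := by
    have hd : Disjoint (S7 false false true) (S7 true false true) := by
      rw [Set.disjoint_left]
      rintro ⟨b1, b2, b3, b4⟩ ⟨h, -, -⟩ ⟨h', -, -⟩
      simp at h; rw [h] at h'; exact Bool.false_ne_true h'
    rw [← Padd _ _ hd]
    congr 1
    ext ⟨b1, b2, b3, b4⟩
    cases b1 <;> simp [S7]
  have hG : P {p | p.2.2.1 = true ∧ p.2.1 = false}
      = P (S7 false true false) + P (S7 true true false) := by
    have hd : Disjoint (S7 false true false) (S7 true true false) := by
      rw [Set.disjoint_left]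
      rintro ⟨b1, b2, b3, b4⟩ ⟨h, -, -⟩ ⟨h', -, -⟩
      simp at h; rw [h] at h'; exact Bool.false_ne_true h'
    rw [← Padd _ _ hd]
    congr 1
    ext ⟨b1, b2, b3, b4⟩
    cases b1 <;> simp [S7]
  -- bound on the unidentified term
  have hq : P {p | p.1 = false ∧ p.2.2.2 = false ∧ p.2.1 = false}
      ≤ P (S7 false false false) + P (S7 false true false) := by
    rw [← hE0]
    apply Pmono
    rintro ⟨b1, b2, b3, b4⟩ ⟨h1, -, h3⟩
    exact ⟨h1, h3⟩
  have hq2 : P (S7 false false false)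
      ≤ P (S7 false false false) + P (S7 false true false) :=
    le_add_of_nonneg_right (Pnonneg _)
  have hmax : max (P {p | p.1 = false ∧ p.2.2.2 = false ∧ p.2.1 = false})
      (P (S7 false false false)) ≤ P (S7 false false false) + P (S7 false true false) :=
    max_le hq hq2
  -- final arithmetic
  rw [hRAI, hRHuman, u1, u2, u3, u4, u5, c1, c2, c3, c4, c5, hA0, hB, hC, hD, hE, hF, hG]
  nlinarith [mul_nonneg (by linarith : (0:ℝ) ≤ 1 + ℓ)
    (sub_nonneg.mpr hmax), Pnonneg (S7 false true false)]
end

section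
/- Let Y0, A, Z ∈ {0,1}, D(0), D(1) ∈ {0,1}, Z independent of (Y0, A, D(0), D(1)), D = D(Z), Y = Y0 on {D = 0}, P(Z=0), P(Z=1) > 0. Fix a ∈ {0,1} and z ∈ {0,1}. Then P(Y0 = 1 | A = a) ≥ max_{z'} P(Y = 1, D = 0 | A = a, Z = z') and P(Y0 = 1 | A = a) ≤ 1 − max_{z'} P(Y = 0, D = 0 | A = a, Z = z'), assuming P(A = a) > 0. -/
open MeasureTheory ProbabilityTheory

/-- Sharp bounds on the conditional baseline risk P(Y0 = 1 | A = a). -/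
theorem stmt10 {Ω : Type*} [MeasurableSpace Ω] (μ : Measure Ω) [IsProbabilityMeasure μ]
    (Y0 Y A Z : Ω → Bool) (Dp : Bool → Ω → Bool) (D : Ω → Bool)
    (hY0 : Measurable Y0) (hY : Measurable Y) (hA : Measurable A) (hZ : Measurable Z)
    (hDp : ∀ z, Measurable (Dp z))
    (hDdef : ∀ ω, D ω = Dp (Z ω) ω)
    (hblind : ∀ ω, D ω = false → Y ω = Y0 ω)
    (hind : IndepFun Z (fun ω => (Y0 ω, A ω, Dp false ω, Dp true ω)) μ)
    (hZ0 : 0 < Pr μ {ω | Z ω = false}) (hZ1 : 0 < Pr μ {ω | Z ω = true})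
    (a : Bool) (hApos : 0 < Pr μ {ω | A ω = a}) :
    cPr μ {ω | Y0 ω = true} {ω | A ω = a} ≥
      max (cPr μ {ω | Y ω = true ∧ D ω = false} {ω | A ω = a ∧ Z ω = true})
          (cPr μ {ω | Y ω = true ∧ D ω = false} {ω | A ω = a ∧ Z ω = false})
    ∧ cPr μ {ω | Y0 ω = true} {ω | A ω = a} ≤
      1 - max (cPr μ {ω | Y ω = false ∧ D ω = false} {ω | A ω = a ∧ Z ω = true})
              (cPr μ {ω | Y ω = false ∧ D ω = false} {ω | A ω = a ∧ Z ω = false}) := by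
  classical
  set f : Ω → Bool × Bool × Bool × Bool := fun ω => (Y0 ω, A ω, Dp false ω, Dp true ω) with hf
  have key : ∀ (b z' : Bool),
      cPr μ {ω | Y ω = b ∧ D ω = false} {ω | A ω = a ∧ Z ω = z'}
        = Pr μ {ω | Y0 ω = b ∧ Dp z' ω = false ∧ A ω = a} / Pr μ {ω | A ω = a} := by
    intro b z'
    have hset1 : {ω | Y ω = b ∧ D ω = false} ∩ {ω | A ω = a ∧ Z ω = z'}
        = Z ⁻¹' {z'} ∩ f ⁻¹' {p : Bool × Bool × Bool × Bool |
            p.1 = b ∧ (bif z' then p.2.2.2 else p.2.2.1) = false ∧ p.2.1 = a} := by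
      ext ω
      simp only [Set.mem_inter_iff, Set.mem_setOf_eq, Set.mem_preimage,
        Set.mem_singleton_iff, hf]
      constructor
      · rintro ⟨⟨hy, hd⟩, ha, hz⟩
        refine ⟨hz, ?_, ?_, ha⟩
        · rw [← hblind ω hd, hy]
        · have := hDdef ω
          rw [hz] at this
          cases z' <;> simpa using this ▸ hd
      · rintro ⟨hz, hy0, hdp, ha⟩
        have hd : D ω = false := by
          rw [hDdef ω, hz]; cases z' <;> simpa using hdp
        exact ⟨⟨by rw [hblind ω hd, hy0], hd⟩, ha, hz⟩
    have hset2 : {ω | A ω = a ∧ Z ω = z'}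
        = Z ⁻¹' {z'} ∩ f ⁻¹' {p : Bool × Bool × Bool × Bool | p.2.1 = a} := by
      ext ω; simp [hf, and_comm]
    have hset3 : f ⁻¹' {p : Bool × Bool × Bool × Bool |
            p.1 = b ∧ (bif z' then p.2.2.2 else p.2.2.1) = false ∧ p.2.1 = a}
        = {ω | Y0 ω = b ∧ Dp z' ω = false ∧ A ω = a} := by
      ext ω; cases z' <;> simp [hf]
    have hm1 : MeasurableSet {p : Bool × Bool × Bool × Bool |
        p.1 = b ∧ (bif z' then p.2.2.2 else p.2.2.1) = false ∧ p.2.1 = a} :=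
      (Set.toFinite _).measurableSet
    have hm2 : MeasurableSet {p : Bool × Bool × Bool × Bool | p.2.1 = a} :=
      (Set.toFinite _).measurableSet
    have e1 := hind.measure_inter_preimage_eq_mul {z'} _ (measurableSet_singleton z') hm1
    have e2 := hind.measure_inter_preimage_eq_mul {z'} _ (measurableSet_singleton z') hm2
    have hA2 : f ⁻¹' {p : Bool × Bool × Bool × Bool | p.2.1 = a} = {ω | A ω = a} := by
      ext ω; simp [hf]
    have hZset : Z ⁻¹' ({z'} : Set Bool) = {ω | Z ω = z'} := by ext ω; simp
    have hzpos : 0 < Pr μ {ω | Z ω = z'} := by cases z' <;> assumption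
    have hz' : (μ {ω | Z ω = z'}).toReal ≠ 0 := ne_of_gt hzpos
    unfold cPr Pr
    rw [hset1, hset2, e1, e2, hset3, hA2, hZset, ENNReal.toReal_mul, ENNReal.toReal_mul]
    exact mul_div_mul_left _ _ hz'
  have hmY0 : ∀ b : Bool, MeasurableSet {ω | Y0 ω = b ∧ A ω = a} := by
    intro b
    have : {ω | Y0 ω = b ∧ A ω = a} = Y0 ⁻¹' {b} ∩ A ⁻¹' {a} := by ext ω; simp
    rw [this]
    exact (hY0 (measurableSet_singleton b)).inter (hA (measurableSet_singleton a))
  have hsplit : Pr μ {ω | Y0 ω = true ∧ A ω = a} + Pr μ {ω | Y0 ω = false ∧ A ω = a}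
      = Pr μ {ω | A ω = a} := by
    have hu : {ω | Y0 ω = true ∧ A ω = a} ∪ {ω | Y0 ω = false ∧ A ω = a}
        = {ω | A ω = a} := by
      ext ω
      simp only [Set.mem_union, Set.mem_setOf_eq]
      cases h : Y0 ω <;> simp [h]
    have hdisj : Disjoint {ω | Y0 ω = true ∧ A ω = a} {ω | Y0 ω = false ∧ A ω = a} :=
      Set.disjoint_left.2 (by rintro ω ⟨h1, -⟩ ⟨h2, -⟩; simp [h1] at h2)
    unfold Pr
    rw [← ENNReal.toReal_add (measure_ne_top μ _) (measure_ne_top μ _),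
      ← measure_union hdisj (hmY0 false), hu]
  have hmono : ∀ (b z' : Bool),
      Pr μ {ω | Y0 ω = b ∧ Dp z' ω = false ∧ A ω = a} ≤ Pr μ {ω | Y0 ω = b ∧ A ω = a} := by
    intro b z'
    exact ENNReal.toReal_mono (measure_ne_top μ _)
      (measure_mono (fun ω ⟨h1, _, h3⟩ => ⟨h1, h3⟩))
  have hcmain : cPr μ {ω | Y0 ω = true} {ω | A ω = a}
      = Pr μ {ω | Y0 ω = true ∧ A ω = a} / Pr μ {ω | A ω = a} := by
    have hseq : {ω | Y0 ω = true} ∩ {ω | A ω = a} = {ω | Y0 ω = true ∧ A ω = a} := by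
      ext ω; simp [Set.mem_inter_iff]
    unfold cPr
    rw [hseq]
  have hPA : Pr μ {ω | A ω = a} ≠ 0 := ne_of_gt hApos
  constructor
  · rw [ge_iff_le, max_le_iff, key true true, key true false, hcmain]
    exact ⟨div_le_div_of_nonneg_right (hmono true true) hApos.le,
      div_le_div_of_nonneg_right (hmono true false) hApos.le⟩
  · have h1 : ∀ z' : Bool,
        cPr μ {ω | Y ω = false ∧ D ω = false} {ω | A ω = a ∧ Z ω = z'}
          ≤ Pr μ {ω | Y0 ω = false ∧ A ω = a} / Pr μ {ω | A ω = a} := by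
      intro z'
      rw [key false z']
      exact div_le_div_of_nonneg_right (hmono false z') hApos.le
    have hfeq : Pr μ {ω | Y0 ω = false ∧ A ω = a} / Pr μ {ω | A ω = a}
        = 1 - cPr μ {ω | Y0 ω = true} {ω | A ω = a} := by
      rw [hcmain]
      field_simp
      linarith [hsplit]
    have ht := (h1 true).trans_eq hfeq
    have hfa := (h1 false).trans_eq hfeq
    have hmax := max_le ht hfa
    linarith
end

section
/- Let Y0, A, Z ∈ {0,1}, D(0), D(1) ∈ {0,1}, Z independent of (Y0, A, D(0), D(1)), D = D(Z), Y = Y0 on {D = 0}, P(Z=0), P(Z=1) > 0. Then the risk of the AI-alone system, R_AI(ℓ) = P(Y0=1, A=0) + ℓ·P(Y0=0, A=1), satisfies R_AI(ℓ) ≥ max_{z'} P(Y=1, D=0, A=0 | Z=z') + ℓ·max_{z'} P(Y=0, D=0, A=1 | Z=z'). -/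
open MeasureTheory ProbabilityTheory

lemma key_bound {Ω : Type*} [MeasurableSpace Ω] (μ : Measure Ω) [IsProbabilityMeasure μ]
    (Y0 Y A Z : Ω → Bool) (Dp : Bool → Ω → Bool) (D : Ω → Bool)
    (hDdef : ∀ ω, D ω = Dp (Z ω) ω)
    (hblind : ∀ ω, D ω = false → Y ω = Y0 ω)
    (hind : IndepFun Z (fun ω => (Y0 ω, A ω, Dp false ω, Dp true ω)) μ)
    (y a z' : Bool) (hz : 0 < Pr μ {ω | Z ω = z'}) :
    cPr μ {ω | Y ω = y ∧ D ω = false ∧ A ω = a} {ω | Z ω = z'}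
      ≤ Pr μ {ω | Y0 ω = y ∧ A ω = a} := by
  set W : Ω → Bool × Bool × Bool × Bool := fun ω => (Y0 ω, A ω, Dp false ω, Dp true ω) with hW
  set T : Set (Bool × Bool × Bool × Bool) :=
    {p | p.1 = y ∧ p.2.1 = a ∧ (bif z' then p.2.2.2 else p.2.2.1) = false} with hT
  have hSW : {ω | Y0 ω = y ∧ A ω = a ∧ Dp z' ω = false} = W ⁻¹' T := by
    ext ω; cases z' <;> simp [hW, hT]
  have hset : {ω | Y ω = y ∧ D ω = false ∧ A ω = a} ∩ {ω | Z ω = z'}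
      = Z ⁻¹' {z'} ∩ W ⁻¹' T := by
    rw [← hSW]
    ext ω
    simp only [Set.mem_inter_iff, Set.mem_setOf_eq, Set.mem_preimage, Set.mem_singleton_iff]
    constructor
    · rintro ⟨⟨hy, hd, ha⟩, hzω⟩
      have hD : Dp z' ω = false := by rw [← hzω, ← hDdef]; exact hd
      have hd' : D ω = false := by rw [hDdef, hzω]; exact hD
      exact ⟨hzω, by rw [← hblind ω hd']; exact hy, ha, hD⟩
    · rintro ⟨hzω, hy, ha, hD⟩
      have hd : D ω = false := by rw [hDdef, hzω]; exact hD
      exact ⟨⟨by rw [hblind ω hd]; exact hy, hd, ha⟩, hzω⟩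
  have hTmeas : MeasurableSet T := (Set.to_countable T).measurableSet
  have hmul : μ (Z ⁻¹' {z'} ∩ W ⁻¹' T) = μ (Z ⁻¹' {z'}) * μ (W ⁻¹' T) :=
    hind.measure_inter_preimage_eq_mul {z'} T (MeasurableSet.singleton z') hTmeas
  have hZeq : Z ⁻¹' {z'} = {ω | Z ω = z'} := by ext ω; simp
  have hcPr : cPr μ {ω | Y ω = y ∧ D ω = false ∧ A ω = a} {ω | Z ω = z'}
      = Pr μ (W ⁻¹' T) := by
    unfold cPr Pr
    rw [hset, hmul, hZeq, ENNReal.toReal_mul]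
    exact mul_div_cancel_left₀ _ (ne_of_gt hz)
  rw [hcPr, ← hSW]
  unfold Pr
  apply ENNReal.toReal_mono (measure_ne_top μ _)
  apply measure_mono
  intro ω hω
  exact ⟨hω.1, hω.2.1⟩

/-- Lower bound on the classification risk of the AI-alone system. -/
theorem stmt12 {Ω : Type*} [MeasurableSpace Ω] (μ : Measure Ω) [IsProbabilityMeasure μ]
    (Y0 Y A Z : Ω → Bool) (Dp : Bool → Ω → Bool) (D : Ω → Bool)
    (hY0 : Measurable Y0) (hY : Measurable Y) (hA : Measurable A) (hZ : Measurable Z)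
    (hDp : ∀ z, Measurable (Dp z))
    (hDdef : ∀ ω, D ω = Dp (Z ω) ω)
    (hblind : ∀ ω, D ω = false → Y ω = Y0 ω)
    (hind : IndepFun Z (fun ω => (Y0 ω, A ω, Dp false ω, Dp true ω)) μ)
    (hZ0 : 0 < Pr μ {ω | Z ω = false}) (hZ1 : 0 < Pr μ {ω | Z ω = true})
    (ℓ : ℝ) (hℓ : 0 ≤ ℓ) (RAI : ℝ)
    (hRAI : RAI = Pr μ {ω | Y0 ω = true ∧ A ω = false}
        + ℓ * Pr μ {ω | Y0 ω = false ∧ A ω = true}) :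
    RAI ≥ max (cPr μ {ω | Y ω = true ∧ D ω = false ∧ A ω = false} {ω | Z ω = true})
              (cPr μ {ω | Y ω = true ∧ D ω = false ∧ A ω = false} {ω | Z ω = false})
        + ℓ * max (cPr μ {ω | Y ω = false ∧ D ω = false ∧ A ω = true} {ω | Z ω = true})
                  (cPr μ {ω | Y ω = false ∧ D ω = false ∧ A ω = true} {ω | Z ω = false}) := by
  have h1 := key_bound μ Y0 Y A Z Dp D hDdef hblind hind true false true hZ1
  have h2 := key_bound μ Y0 Y A Z Dp D hDdef hblind hind true false false hZ0
  have h3 := key_bound μ Y0 Y A Z Dp D hDdef hblind hind false true true hZ1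
  have h4 := key_bound μ Y0 Y A Z Dp D hDdef hblind hind false true false hZ0
  rw [hRAI]
  have hm1 : max (cPr μ {ω | Y ω = true ∧ D ω = false ∧ A ω = false} {ω | Z ω = true})
      (cPr μ {ω | Y ω = true ∧ D ω = false ∧ A ω = false} {ω | Z ω = false})
      ≤ Pr μ {ω | Y0 ω = true ∧ A ω = false} := max_le h1 h2
  have hm2 : max (cPr μ {ω | Y ω = false ∧ D ω = false ∧ A ω = true} {ω | Z ω = true})
      (cPr μ {ω | Y ω = false ∧ D ω = false ∧ A ω = true} {ω | Z ω = false})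
      ≤ Pr μ {ω | Y0 ω = false ∧ A ω = true} := max_le h3 h4
  exact add_le_add hm1 (mul_le_mul_of_nonneg_left hm2 hℓ)
end

section
/- Under the same setup, R_AI(ℓ) = P(Y0=1, A=0) + ℓ·P(Y0=0, A=1) satisfies R_AI(ℓ) ≤ P(A=0) − max_{z'} P(Y=0, D=0, A=0 | Z=z') + ℓ·[P(A=1) − max_{z'} P(Y=1, D=0, A=1 | Z=z')]. -/
open MeasureTheory ProbabilityTheory

/-- Upper bound on the classification risk of the AI-alone system. -/
theorem stmt13 {Ω : Type*} [MeasurableSpace Ω] (μ : Measure Ω) [IsProbabilityMeasure μ]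
    (Y0 Y A Z : Ω → Bool) (Dp : Bool → Ω → Bool) (D : Ω → Bool)
    (hY0 : Measurable Y0) (hY : Measurable Y) (hA : Measurable A) (hZ : Measurable Z)
    (hDp : ∀ z, Measurable (Dp z))
    (hDdef : ∀ ω, D ω = Dp (Z ω) ω)
    (hblind : ∀ ω, D ω = false → Y ω = Y0 ω)
    (hind : IndepFun Z (fun ω => (Y0 ω, A ω, Dp false ω, Dp true ω)) μ)
    (hZ0 : 0 < Pr μ {ω | Z ω = false}) (hZ1 : 0 < Pr μ {ω | Z ω = true})
    (ℓ : ℝ) (hℓ : 0 ≤ ℓ) (RAI : ℝ)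
    (hRAI : RAI = Pr μ {ω | Y0 ω = true ∧ A ω = false}
        + ℓ * Pr μ {ω | Y0 ω = false ∧ A ω = true}) :
    RAI ≤ Pr μ {ω | A ω = false}
        - max (cPr μ {ω | Y ω = false ∧ D ω = false ∧ A ω = false} {ω | Z ω = true})
              (cPr μ {ω | Y ω = false ∧ D ω = false ∧ A ω = false} {ω | Z ω = false})
        + ℓ * (Pr μ {ω | A ω = true}
          - max (cPr μ {ω | Y ω = true ∧ D ω = false ∧ A ω = true} {ω | Z ω = true})
                (cPr μ {ω | Y ω = true ∧ D ω = false ∧ A ω = true} {ω | Z ω = false})) := by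
  have hZb : ∀ b : Bool, 0 < Pr μ {ω | Z ω = b} := by
    intro b; cases b
    · exact hZ0
    · exact hZ1
  have key : ∀ (b y a : Bool),
      cPr μ {ω | Y ω = y ∧ D ω = false ∧ A ω = a} {ω | Z ω = b}
        = Pr μ {ω | Y0 ω = y ∧ Dp b ω = false ∧ A ω = a} := by
    intro b y a
    set W := fun ω => (Y0 ω, A ω, Dp false ω, Dp true ω) with hWdef
    set t : Set (Bool × Bool × Bool × Bool) :=
      {p | p.1 = y ∧ p.2.1 = a ∧ (cond b p.2.2.2 p.2.2.1) = false} with ht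
    have hset : {ω | Y ω = y ∧ D ω = false ∧ A ω = a} ∩ {ω | Z ω = b}
        = Z ⁻¹' {b} ∩ W ⁻¹' t := by
      ext ω
      have hcond : cond b (Dp true ω) (Dp false ω) = Dp b ω := by cases b <;> rfl
      simp only [Set.mem_inter_iff, Set.mem_setOf_eq, Set.mem_preimage,
        Set.mem_singleton_iff, ht, hWdef]
      constructor
      · rintro ⟨⟨hy, hd, ha⟩, hz⟩
        refine ⟨hz, ?_, ha, ?_⟩
        · rw [← hblind ω hd]; exact hy
        · rw [hcond, ← hz, ← hDdef ω]; exact hd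
      · rintro ⟨hz, hy0, ha, hc⟩
        have hDb : D ω = false := by rw [hDdef ω, hz, ← hcond]; exact hc
        exact ⟨⟨by rw [hblind ω hDb]; exact hy0, hDb, ha⟩, hz⟩
    have hμ : μ (Z ⁻¹' {b} ∩ W ⁻¹' t) = μ (Z ⁻¹' {b}) * μ (W ⁻¹' t) :=
      hind.measure_inter_preimage_eq_mul _ _ (measurableSet_singleton b)
        ((Set.toFinite t).measurableSet)
    have hWt : W ⁻¹' t = {ω | Y0 ω = y ∧ Dp b ω = false ∧ A ω = a} := by
      ext ω
      have hcond : cond b (Dp true ω) (Dp false ω) = Dp b ω := by cases b <;> rfl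
      simp only [Set.mem_preimage, ht, hWdef, Set.mem_setOf_eq, hcond]
      tauto
    have hZset : {ω | Z ω = b} = Z ⁻¹' {b} := rfl
    have hzb : Pr μ {ω | Z ω = b} ≠ 0 := ne_of_gt (hZb b)
    unfold cPr Pr
    rw [hset, hμ, ENNReal.toReal_mul, ← hWt]
    rw [show (μ (Z ⁻¹' {b})).toReal = Pr μ {ω | Z ω = b} from rfl]
    rw [mul_comm, mul_div_assoc,
      show (μ {ω | Z ω = b}).toReal = Pr μ {ω | Z ω = b} from rfl, div_self hzb, mul_one]
  have mono : ∀ (b y a : Bool),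
      Pr μ {ω | Y0 ω = y ∧ Dp b ω = false ∧ A ω = a} ≤ Pr μ {ω | Y0 ω = y ∧ A ω = a} := by
    intro b y a
    apply ENNReal.toReal_mono (measure_ne_top μ _)
    exact measure_mono (fun ω h => ⟨h.1, h.2.2⟩)
  have add : ∀ a : Bool, Pr μ {ω | Y0 ω = true ∧ A ω = a} + Pr μ {ω | Y0 ω = false ∧ A ω = a}
      = Pr μ {ω | A ω = a} := by
    intro a
    have hu : {ω | Y0 ω = true ∧ A ω = a} ∪ {ω | Y0 ω = false ∧ A ω = a} = {ω | A ω = a} := by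
      ext ω
      cases hb : Y0 ω <;> simp [hb]
    have hdisj : Disjoint {ω | Y0 ω = true ∧ A ω = a} {ω | Y0 ω = false ∧ A ω = a} := by
      rw [Set.disjoint_left]
      rintro ω ⟨h1, -⟩ ⟨h2, -⟩
      rw [h1] at h2; exact Bool.noConfusion h2
    have hm : MeasurableSet {ω | Y0 ω = false ∧ A ω = a} := by
      have : {ω | Y0 ω = false ∧ A ω = a} = Y0 ⁻¹' {false} ∩ A ⁻¹' {a} := rfl
      rw [this]
      exact (hY0 (measurableSet_singleton _)).inter (hA (measurableSet_singleton _))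
    unfold Pr
    rw [← ENNReal.toReal_add (measure_ne_top μ _) (measure_ne_top μ _),
      ← measure_union hdisj hm, hu]
  rw [key true false false, key false false false, key true true true, key false true true,
    hRAI]
  have h1 : max (Pr μ {ω | Y0 ω = false ∧ Dp true ω = false ∧ A ω = false})
      (Pr μ {ω | Y0 ω = false ∧ Dp false ω = false ∧ A ω = false})
      ≤ Pr μ {ω | Y0 ω = false ∧ A ω = false} :=
    max_le (mono true false false) (mono false false false)
  have h2 : max (Pr μ {ω | Y0 ω = true ∧ Dp true ω = false ∧ A ω = true})
      (Pr μ {ω | Y0 ω = true ∧ Dp false ω = false ∧ A ω = true})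
      ≤ Pr μ {ω | Y0 ω = true ∧ A ω = true} :=
    max_le (mono true true true) (mono false true true)
  have a0 := add false
  have a1 := add true
  nlinarith [mul_le_mul_of_nonneg_left h2 hℓ]
end

section
/- Let Y0, D, A ∈ {0,1} with ℓ ≥ 0, and consider the generic risk R(ℓ00, ℓ01, ℓ11) = p10 + ℓ01·p01 + ℓ11·p11 + ℓ00·p00 where p_{yd} = P(Y0 = y, D* = d) for a decision D*. For two decisions D(1), D(0) whose marginal distribution of Y0 is common (P(Y0 = y) is the same in both arms), the risk difference satisfies R₁ − R₀ = (1 − ℓ11)·(p10(D(1)) − p10(D(0))) + (ℓ00 − ℓ01)·(p00(D(1)) − p00(D(0))). -/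
open MeasureTheory ProbabilityTheory

lemma pr_split_s18 {Ω : Type*} [MeasurableSpace Ω] (μ : Measure Ω) [IsProbabilityMeasure μ]
    (Y0 : Ω → Bool) (D : Ω → Bool) (hY0 : Measurable Y0) (hD : Measurable D) (y : Bool) :
    Pr μ {ω | Y0 ω = y ∧ D ω = true} + Pr μ {ω | Y0 ω = y ∧ D ω = false}
      = Pr μ {ω | Y0 ω = y} := by
  have h1 : MeasurableSet {ω | Y0 ω = y ∧ D ω = true} :=
    (hY0 (MeasurableSet.singleton y)).inter (hD (MeasurableSet.singleton true))
  have h2 : MeasurableSet {ω | Y0 ω = y ∧ D ω = false} :=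
    (hY0 (MeasurableSet.singleton y)).inter (hD (MeasurableSet.singleton false))
  have hdisj : Disjoint {ω | Y0 ω = y ∧ D ω = true} {ω | Y0 ω = y ∧ D ω = false} := by
    rw [Set.disjoint_left]; rintro ω ⟨_, h⟩ ⟨_, h'⟩; simp [h] at h'
  have hunion : {ω | Y0 ω = y ∧ D ω = true} ∪ {ω | Y0 ω = y ∧ D ω = false}
      = {ω | Y0 ω = y} := by
    ext ω; simp only [Set.mem_union, Set.mem_setOf_eq]
    cases D ω <;> tauto
  unfold Pr
  rw [← ENNReal.toReal_add (measure_ne_top μ _) (measure_ne_top μ _),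
    ← measure_union hdisj h2, hunion]

/-- Generic-loss risk-difference identification.  The two
decisions D(1), D(0) are defined on a common space with the same baseline
outcome Y0, so its marginal distribution is common to both arms. -/
theorem stmt18 {Ω : Type*} [MeasurableSpace Ω] (μ : Measure Ω) [IsProbabilityMeasure μ]
    (Y0 : Ω → Bool) (Dp : Bool → Ω → Bool)
    (hY0 : Measurable Y0) (hDp : ∀ z, Measurable (Dp z))
    (ℓ00 ℓ01 ℓ11 : ℝ)
    (p : Bool → Bool → Bool → ℝ)
    (hp : ∀ y d z, p y d z = Pr μ {ω | Y0 ω = y ∧ Dp z ω = d})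
    (R : Bool → ℝ)
    (hR : ∀ z, R z = p true false z + ℓ01 * p false true z
        + ℓ11 * p true true z + ℓ00 * p false false z) :
    R true - R false = (1 - ℓ11) * (p true false true - p true false false)
      + (ℓ00 - ℓ01) * (p false false true - p false false false) := by
  have key : ∀ y z, p y true z + p y false z = Pr μ {ω | Y0 ω = y} := by
    intro y z; rw [hp, hp]; exact pr_split_s18 μ Y0 (Dp z) hY0 (hDp z) y
  have h1 := key true true
  have h2 := key true false
  have h3 := key false true
  have h4 := key false false
  rw [hR, hR]
  linear_combination ℓ11 * (h1 - h2) + ℓ01 * (h3 - h4)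
end

section
/- Let f, f̂ : X → ℝ be measurable with g(x) = 1{f(x) ≥ 0} and ĝ(x) = 1{f̂(x) ≥ 0}. Suppose there exist C > 0 and α > 0 such that P(|f(X)| ≤ t) ≤ C·t^α for all t > 0 (margin condition). Then E[|ĝ(X) − g(X)|·|f(X)|] ≤ C·‖f − f̂‖_∞^{1+α}, where ‖f − f̂‖_∞ = sup_x |f(x) − f̂(x)|. -/
/-!
Where the plug-in rule `1{f̂ ≥ 0}` disagrees with `1{f ≥ 0}`, the signs of `f` and `f̂` differ, so
`|f| ≤ |f - f̂| ≤ M := ‖f - f̂‖_∞`. The integrand is therefore at most `M` and vanishes outside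
`{|f(X)| ≤ M}`, whose probability is at most `C M^α` by the margin condition.
-/

open MeasureTheory ProbabilityTheory

theorem abs_le_abs_sub_of_not_nonneg_iff {α : Type*} [AddCommGroup α] [LinearOrder α]
    [IsOrderedAddMonoid α] {a b : α} (h : ¬(0 ≤ a ↔ 0 ≤ b)) : |a| ≤ |a - b| := by
  rcases le_or_gt 0 a with ha | ha
  · rw [abs_of_nonneg ha, abs_of_nonneg (by grind)]
    grind
  · rw [abs_of_neg ha, abs_sub_comm, abs_of_nonneg (by grind)]
    grind

theorem abs_ite_sub_ite_mul_abs (a b : ℝ) :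
    |(if 0 ≤ b then (1 : ℝ) else 0) - (if 0 ≤ a then 1 else 0)| * |a| =
      if (0 ≤ a ↔ 0 ≤ b) then 0 else |a| := by
  by_cases ha : 0 ≤ a <;> by_cases hb : 0 ≤ b <;> simp [ha, hb]

theorem integral_le_measureReal_mul_of_support_subset {Ω : Type*} [MeasurableSpace Ω]
    {μ : Measure Ω} [IsFiniteMeasure μ] {f : Ω → ℝ} {s : Set Ω} {M : ℝ}
    (hf_nonneg : 0 ≤ f) (hf_le : ∀ ω, f ω ≤ M) (hf_supp : Function.support f ⊆ s) :
    ∫ ω, f ω ∂μ ≤ μ.real s * M := by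
  have hle_indicator : f ≤ (toMeasurable μ s).indicator fun _ => M := fun ω => by
    by_cases hω : ω ∈ s
    · rw [Set.indicator_of_mem (subset_toMeasurable μ s hω)]
      exact hf_le ω
    · rw [Function.notMem_support.mp fun h => hω (hf_supp h)]
      exact Set.indicator_nonneg (fun _ _ => (hf_nonneg ω).trans (hf_le ω)) ω
  calc ∫ ω, f ω ∂μ ≤ ∫ ω, (toMeasurable μ s).indicator (fun _ => M) ω ∂μ :=
        integral_mono_of_nonneg (.of_forall hf_nonneg)
          ((integrable_const M).indicator (measurableSet_toMeasurable μ s))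
          (.of_forall hle_indicator)
    _ = μ.real s * M := by
        rw [integral_indicator_const M (measurableSet_toMeasurable μ s), smul_eq_mul,
          measureReal_def, measure_toMeasurable, ← measureReal_def]

theorem stmt19_general {Ω 𝒳 : Type*} [MeasurableSpace Ω] [MeasurableSpace 𝒳]
    (μ : Measure Ω) [IsProbabilityMeasure μ]
    (X : Ω → 𝒳)
    (f fhat : 𝒳 → ℝ)
    (g ghat : 𝒳 → ℝ)
    (hg : ∀ x, g x = if 0 ≤ f x then (1:ℝ) else 0)
    (hghat : ∀ x, ghat x = if 0 ≤ fhat x then (1:ℝ) else 0)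
    (C α : ℝ)
    (hbdd : BddAbove (Set.range fun x => |f x - fhat x|))
    (hmargin : ∀ t : ℝ, 0 < t → (μ {ω | |f (X ω)| ≤ t}).toReal ≤ C * t ^ α) :
    ∫ ω, |ghat (X ω) - g (X ω)| * |f (X ω)| ∂μ
      ≤ C * (⨆ x, |f x - fhat x|) ^ (1 + α) := by
  set M := ⨆ x, |f x - fhat x|
  have hM : ∀ x, |f x - fhat x| ≤ M := le_ciSup hbdd
  have hM_nonneg : 0 ≤ M := Real.iSup_nonneg fun _ => abs_nonneg _
  have hC_nonneg : 0 ≤ C := by simpa using ENNReal.toReal_nonneg.trans (hmargin 1 one_pos)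
  have hintegral : ∫ ω, |ghat (X ω) - g (X ω)| * |f (X ω)| ∂μ ≤
      μ.real {ω | |f (X ω)| ≤ M} * M := by
    have herror (x : 𝒳) : |ghat x - g x| * |f x| =
        if (0 ≤ f x ↔ 0 ≤ fhat x) then 0 else |f x| := by
      rw [hg, hghat, abs_ite_sub_ite_mul_abs]
    refine integral_le_measureReal_mul_of_support_subset (fun ω => by positivity)
      (fun ω => ?_) (fun ω hω => ?_)
    · rw [herror]
      split_ifs with hsign
      exacts [hM_nonneg, (abs_le_abs_sub_of_not_nonneg_iff hsign).trans (hM _)]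
    · rw [Function.mem_support, herror] at hω
      split_ifs at hω with hsign
      exacts [absurd rfl hω, (abs_le_abs_sub_of_not_nonneg_iff hsign).trans (hM _)]
  rcases hM_nonneg.eq_or_lt with hM_zero | hM_pos
  · rw [← hM_zero, mul_zero] at hintegral
    exact hintegral.trans (by positivity)
  · calc ∫ ω, |ghat (X ω) - g (X ω)| * |f (X ω)| ∂μ
        ≤ μ.real {ω | |f (X ω)| ≤ M} * M := hintegral
      _ ≤ C * M ^ α * M := mul_le_mul_of_nonneg_right (hmargin M hM_pos) hM_nonneg
      _ = C * M ^ (1 + α) := by rw [Real.rpow_add hM_pos, Real.rpow_one]; ring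

/-- Margin-condition lemma (Audibert–Tsybakov style): the
plug-in classifier excess term is bounded by the sup-norm error raised to the
power 1 + α. -/
theorem stmt19 {Ω 𝒳 : Type*} [MeasurableSpace Ω] [MeasurableSpace 𝒳] [Nonempty 𝒳]
    (μ : Measure Ω) [IsProbabilityMeasure μ]
    (X : Ω → 𝒳) (hX : Measurable X)
    (f fhat : 𝒳 → ℝ) (hf : Measurable f) (hfhat : Measurable fhat)
    (g ghat : 𝒳 → ℝ)
    (hg : ∀ x, g x = if 0 ≤ f x then (1:ℝ) else 0)
    (hghat : ∀ x, ghat x = if 0 ≤ fhat x then (1:ℝ) else 0)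
    (C α : ℝ) (hC : 0 < C) (hα : 0 < α)
    (hbdd : BddAbove (Set.range fun x => |f x - fhat x|))
    (hmargin : ∀ t : ℝ, 0 < t → (μ {ω | |f (X ω)| ≤ t}).toReal ≤ C * t ^ α) :
    ∫ ω, |ghat (X ω) - g (X ω)| * |f (X ω)| ∂μ
      ≤ C * (⨆ x, |f x - fhat x|) ^ (1 + α) :=
  stmt19_general μ X f fhat g ghat hg hghat C α hbdd hmargin
end
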